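/- arXiv:2601.13093 — 17 statements merged into one kernel-verified Lean document; each statement's English description precedes it below -/
import Mathlib

section
/- Let R be a commutative ring and let P and Q be prime ideals of R with P strictly contained in Q. Then Q does not cover P; that is, there exists an ideal of R strictly between P and Q. -/
/-- If `P ⊊ Q` are prime ideals of a commutative ring, then `Q` does not cover `P`:
there is an ideal strictly between `P` and `Q`. -/
theorem prime_not_covBy_prime {R : Type*} [CommRing R] {P Q : Ideal R}
    (hP : P.IsPrime) (hQ : Q.IsPrime) (h : P < Q) :
    ¬ P ⋖ Q ∧ ∃ J : Ideal R, P < J ∧ J < Q := by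
  obtain ⟨x, hxQ, hxP⟩ := SetLike.exists_of_lt h
  set J : Ideal R := P ⊔ Ideal.span {x ^ 2} with hJ
  have hx2P : x ^ 2 ∉ P := fun hx => hxP (hP.mem_of_pow_mem 2 hx)
  have hPJ : P < J := lt_of_le_of_ne le_sup_left (by
    intro hEq
    exact hx2P (hEq ▸ Submodule.mem_sup_right (Ideal.mem_span_singleton_self (x ^ 2))))
  have hxJ : x ∉ J := by
    intro hx
    rw [hJ, Submodule.mem_sup] at hx
    obtain ⟨p, hp, q, hq, hpq⟩ := hx
    obtain ⟨r, rfl⟩ := Ideal.mem_span_singleton'.mp hq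
    have hfac : x * (1 - r * x) ∈ P := by
      have : x * (1 - r * x) = p := by linear_combination -hpq
      rwa [this]
    have h1 : (1 : R) - r * x ∈ P := (hP.mem_or_mem hfac).resolve_left hxP
    have : (1 : R) ∈ Q := by
      have := Q.add_mem (h.le h1) (Q.mul_mem_left r hxQ)
      simpa using this
    exact hQ.ne_top (Q.eq_top_iff_one.mpr this)
  have hJQ : J < Q := lt_of_le_of_ne
    (sup_le h.le (Ideal.span_le.mpr (by simpa using Q.pow_mem_of_mem hxQ 2 (by norm_num))))
    (fun hEq => hxJ (hEq ▸ hxQ))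
  refine ⟨fun hc => hc.2 hPJ hJQ, J, hPJ, hJQ⟩
end

section
/- Let I be a proper ideal of a commutative ring R. Then I is quasi-maximal if and only if one of the following holds: (i) I is a maximal ideal of R; (ii) I is the intersection of two distinct maximal ideals of R; (iii) there exists a maximal ideal M of R such that I is M-primary, M² ⊆ I ⊊ M, and M = I + Ra for every a ∈ M \ I. -/
/-- A proper ideal `I` is quasi-maximal if for every `a ∉ I`, the ideal `I + Ra`
is either the whole ring or a maximal ideal. -/
def Ideal.QuasiMaximal {R : Type*} [CommRing R] (I : Ideal R) : Prop :=
  I ≠ ⊤ ∧ ∀ a : R, a ∉ I → I ⊔ Ideal.span {a} = ⊤ ∨ (I ⊔ Ideal.span {a}).IsMaximal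

/-- `I` is ramified at `M`: `I` is `M`-primary, `M² ⊆ I ⊊ M`, and `M = I + Ra`
for every `a ∈ M \ I`. -/
def Ideal.RamifiedAt {R : Type*} [CommRing R] (I M : Ideal R) : Prop :=
  I.IsPrimary ∧ I.radical = M ∧ M ^ 2 ≤ I ∧ I < M ∧
    ∀ a ∈ M, a ∉ I → M = I ⊔ Ideal.span {a}

/-- A proper ideal is quasi-maximal iff it is maximal, or the intersection of two
distinct maximal ideals, or ramified at some maximal ideal. -/
theorem quasiMaximal_iff_trichotomy {R : Type*} [CommRing R] (I : Ideal R) (hI : I ≠ ⊤) :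
    I.QuasiMaximal ↔
      I.IsMaximal ∨
      (∃ M₁ M₂ : Ideal R, M₁.IsMaximal ∧ M₂.IsMaximal ∧ M₁ ≠ M₂ ∧ I = M₁ ⊓ M₂) ∨
      (∃ M : Ideal R, M.IsMaximal ∧ I.RamifiedAt M) := by
  constructor
  · rintro ⟨-, hqm⟩
    by_cases hmax : I.IsMaximal
    · exact Or.inl hmax
    right
    -- key: for every maximal N ⊇ I and a ∈ N \ I, I ⊔ span{a} = N
    have key : ∀ N : Ideal R, N.IsMaximal → I ≤ N → ∀ a ∈ N, a ∉ I →
        I ⊔ Ideal.span {a} = N := by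
      intro N hN hIN a haN haI
      have hJN : I ⊔ Ideal.span {a} ≤ N :=
        sup_le hIN (Ideal.span_le.mpr (by simpa using haN))
      rcases hqm a haI with h | h
      · exact absurd (h ▸ hJN) (fun ht => hN.ne_top (top_le_iff.mp ht))
      · exact h.eq_of_le hN.ne_top hJN
    obtain ⟨M, hM, hIM⟩ := Ideal.exists_le_maximal I hI
    by_cases huniq : ∃ N : Ideal R, N.IsMaximal ∧ I ≤ N ∧ N ≠ M
    · obtain ⟨N, hN, hIN, hNM⟩ := huniq
      left
      refine ⟨M, N, hM, hN, hNM.symm, le_antisymm (le_inf hIM hIN) ?_⟩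
      intro x hx
      by_contra hxI
      have h1 : I ⊔ Ideal.span {x} = M := key M hM hIM x hx.1 hxI
      have h2 : I ⊔ Ideal.span {x} = N := key N hN hIN x hx.2 hxI
      exact hNM (h2 ▸ h1)
    · -- M is the unique maximal ideal containing I
      push_neg at huniq
      have uniq : ∀ N : Ideal R, N.IsMaximal → I ≤ N → N = M := fun N hN hIN =>
        huniq N hN hIN
      right
      refine ⟨M, hM, ?_⟩
      have hIneM : I ≠ M := fun h => hmax (h ▸ hM)
      have hlt : I < M := lt_of_le_of_ne hIM hIneM
      have hgen : ∀ a ∈ M, a ∉ I → M = I ⊔ Ideal.span {a} := fun a ha haI =>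
        (key M hM hIM a ha haI).symm
      -- squares of elements of M lie in I
      have hsq : ∀ x ∈ M, x ^ 2 ∈ I := by
        intro x hxM
        by_cases hxI : x ∈ I
        · rw [pow_two]; exact I.mul_mem_left x hxI
        by_contra hx2
        have hx2M : x ^ 2 ∈ M := by rw [pow_two]; exact M.mul_mem_left x hxM
        have hMeq : I ⊔ Ideal.span {x ^ 2} = M := key M hM hIM (x ^ 2) hx2M hx2
        have hxmem : x ∈ I ⊔ Ideal.span {x ^ 2} := hMeq ▸ hxM
        rw [Submodule.mem_sup] at hxmem
        obtain ⟨i, hi, z, hz, hizx⟩ := hxmem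
        rw [Ideal.mem_span_singleton'] at hz
        obtain ⟨r, hr⟩ := hz
        -- x = i + r * x^2, so x * (1 - r * x) = i ∈ I
        have hux : x * (1 - r * x) = i := by rw [← hr] at hizx; linear_combination -hizx
        -- 1 - r*x ∉ M
        have hu_notM : (1 - r * x) ∉ M := by
          intro hmem
          have : (1 : R) ∈ M := by
            have : (1 - r * x) + r * x ∈ M := M.add_mem hmem (M.mul_mem_left r hxM)
            simpa using this
          exact hM.ne_top (Ideal.eq_top_iff_one M |>.mpr this)
        have hu_notI : (1 - r * x) ∉ I := fun h => hu_notM (hIM h)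
        rcases hqm (1 - r * x) hu_notI with h | h
        · -- 1 = i' + s * (1 - r*x); then x = i'*x + s*(x*(1-r*x)) ∈ I
          have h1 : (1 : R) ∈ I ⊔ Ideal.span {1 - r * x} := h ▸ Submodule.mem_top
          rw [Submodule.mem_sup] at h1
          obtain ⟨i', hi', z', hz', h1eq⟩ := h1
          rw [Ideal.mem_span_singleton'] at hz'
          obtain ⟨s, hs⟩ := hz'
          have : x = i' * x + s * (x * (1 - r * x)) := by
            rw [← hs] at h1eq; linear_combination (x : R) * h1eq.symm
          rw [hux] at this
          exact hxI (this ▸ I.add_mem (I.mul_mem_right x hi') (I.mul_mem_left s hi))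
        · have := uniq _ h (le_sup_left)
          exact hu_notM (this ▸ Ideal.mem_sup_right (Ideal.mem_span_singleton_self _))
      have hrad : I.radical = M := by
        apply le_antisymm
        · calc I.radical ≤ M.radical := Ideal.radical_mono hIM
            _ = M := hM.isPrime.radical
        · intro x hx
          exact ⟨2, hsq x hx⟩
      have hM2 : M ^ 2 ≤ I := by
        rw [pow_two, Ideal.mul_le]
        intro x hx y hy
        by_cases hyI : y ∈ I
        · exact I.mul_mem_left x hyI
        · have hMeq : M = I ⊔ Ideal.span {y} := hgen y hy hyI
          have hxmem : x ∈ I ⊔ Ideal.span {y} := hMeq ▸ hx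
          rw [Submodule.mem_sup] at hxmem
          obtain ⟨i, hi, z, hz, hizx⟩ := hxmem
          rw [Ideal.mem_span_singleton'] at hz
          obtain ⟨r, hr⟩ := hz
          have : x * y = i * y + r * y ^ 2 := by rw [← hr] at hizx; linear_combination (y : R) * hizx.symm
          rw [this]
          exact I.add_mem (I.mul_mem_right y hi) (I.mul_mem_left r (hsq y hy))
      have hprim : I.IsPrimary := by
        rw [Ideal.isPrimary_iff]
        refine ⟨hI, ?_⟩
        intro x y hxy
        by_cases hyM : y ∈ M
        · exact Or.inr (hrad ▸ hyM)
        left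
        have hyI : y ∉ I := fun h => hyM (hIM h)
        rcases hqm y hyI with h | h
        · have h1 : (1 : R) ∈ I ⊔ Ideal.span {y} := h ▸ Submodule.mem_top
          rw [Submodule.mem_sup] at h1
          obtain ⟨i', hi', z', hz', h1eq⟩ := h1
          rw [Ideal.mem_span_singleton'] at hz'
          obtain ⟨s, hs⟩ := hz'
          have : x = x * i' + s * (x * y) := by
            rw [← hs] at h1eq; linear_combination (x : R) * h1eq.symm
          exact this ▸ I.add_mem (I.mul_mem_left x hi') (I.mul_mem_left s hxy)
        · have := uniq _ h (le_sup_left)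
          exact absurd (this ▸ Ideal.mem_sup_right (Ideal.mem_span_singleton_self _)) hyM
      exact ⟨hprim, hrad, hM2, hlt, hgen⟩
  · rintro (hmax | ⟨M₁, M₂, hM₁, hM₂, hne, hInt⟩ | ⟨M, hM, hprim, hrad, hM2, hlt, hgen⟩)
    · refine ⟨hI, fun a haI => Or.inl ?_⟩
      by_contra hne
      have := hmax.eq_of_le hne le_sup_left
      exact haI (this ▸ Ideal.mem_sup_right (Ideal.mem_span_singleton_self _))
    · refine ⟨hI, fun a haI => ?_⟩
      have haI' : a ∉ M₁ ⊓ M₂ := hInt ▸ haI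
      rw [Submodule.mem_inf, not_and_or] at haI'
      -- helper: if a ∉ M₁ but a ∈ M₂ then I ⊔ span{a} = M₂
      have helper : ∀ N₁ N₂ : Ideal R, N₁.IsMaximal → N₂.IsMaximal → I = N₁ ⊓ N₂ →
          a ∉ N₁ → a ∈ N₂ → I ⊔ Ideal.span {a} = N₂ := by
        intro N₁ N₂ hN₁ hN₂ hIeq haN₁ haN₂
        apply le_antisymm
        · exact sup_le (hIeq ▸ inf_le_right) (Ideal.span_le.mpr (by simpa using haN₂))
        · -- N₁ ⊔ (I ⊔ span{a}) = ⊤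
          have htop : N₁ ⊔ (I ⊔ Ideal.span {a}) = ⊤ := by
            by_contra hne'
            have := hN₁.eq_of_le hne' le_sup_left
            exact haN₁ (this ▸ le_sup_right (α := Ideal R)
              (Ideal.mem_sup_right (Ideal.mem_span_singleton_self a)))
          have h1 : (1 : R) ∈ N₁ ⊔ (I ⊔ Ideal.span {a}) := htop ▸ Submodule.mem_top
          rw [Submodule.mem_sup] at h1
          obtain ⟨m, hm, j, hj, h1eq⟩ := h1
          intro x hx
          have hxm : x * m ∈ I := hIeq ▸ Submodule.mem_inf.mpr
            ⟨N₁.mul_mem_left x hm, N₂.mul_mem_right m hx⟩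
          have : x = x * m + x * j := by linear_combination (x : R) * h1eq.symm
          rw [this]
          exact Submodule.add_mem _ (Ideal.mem_sup_left hxm)
            ((I ⊔ Ideal.span {a}).mul_mem_left x hj)
      by_cases hm1 : a ∈ M₁
      · rcases haI' with h | hm2
        · exact absurd hm1 h
        · exact Or.inr ((helper M₂ M₁ hM₂ hM₁ (by rw [hInt, inf_comm]) hm2 hm1) ▸ hM₁)
      · by_cases hm2 : a ∈ M₂
        · exact Or.inr ((helper M₁ M₂ hM₁ hM₂ hInt hm1 hm2) ▸ hM₂)
        · left
          by_contra hne'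
          obtain ⟨N, hN, hJN⟩ := Ideal.exists_le_maximal _ hne'
          have hmul : M₁ * M₂ ≤ N :=
            le_trans Ideal.mul_le_inf (hInt ▸ le_sup_left.trans hJN)
          have haN : a ∈ N := hJN (Ideal.mem_sup_right (Ideal.mem_span_singleton_self a))
          rcases (Ideal.IsPrime.mul_le hN.isPrime).mp hmul with hle | hle
          · exact hm1 ((hM₁.eq_of_le hN.ne_top hle) ▸ haN)
          · exact hm2 ((hM₂.eq_of_le hN.ne_top hle) ▸ haN)
    · refine ⟨hI, fun a haI => ?_⟩
      by_cases haM : a ∈ M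
      · exact Or.inr ((hgen a haM haI) ▸ hM)
      · left
        by_contra hne'
        obtain ⟨N, hN, hJN⟩ := Ideal.exists_le_maximal _ hne'
        have hIN : I ≤ N := le_sup_left.trans hJN
        have hMN : M ≤ N := by
          calc M = I.radical := hrad.symm
            _ ≤ N.radical := Ideal.radical_mono hIN
            _ = N := hN.isPrime.radical
        have : M = N := hM.eq_of_le hN.ne_top hMN
        exact haM (this ▸ hJN (Ideal.mem_sup_right (Ideal.mem_span_singleton_self a)))
end

section
/- Let I be a proper ideal of a commutative ring R. Then I is quasi-maximal if and only if the length of R/I as an R-module satisfies 1 ≤ length_R(R/I) ≤ 2 and at most two prime ideals of R contain I. -/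
/-- The length of a module: the supremum of lengths of chains of submodules. -/
noncomputable def moduleLength (R M : Type*) [Ring R] [AddCommGroup M] [Module R M] :
    WithBot ℕ∞ :=
  Order.krullDim (Submodule R M)

/-- A proper ideal `I` is quasi-maximal iff `1 ≤ length_R(R/I) ≤ 2` and at most
two prime ideals of `R` contain `I`. -/
theorem quasiMaximal_iff_length_le_two {R : Type*} [CommRing R] (I : Ideal R) (hI : I ≠ ⊤) :
    I.QuasiMaximal ↔
      1 ≤ moduleLength R (R ⧸ I) ∧ moduleLength R (R ⧸ I) ≤ 2 ∧
        {P : Ideal R | P.IsPrime ∧ I ≤ P}.encard ≤ 2 := by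
  -- the correspondence theorem
  have key : moduleLength R (R ⧸ I) = Order.krullDim {J : Submodule R R // I ≤ J} :=
    Order.krullDim_eq_of_orderIso (Submodule.comapMkQRelIso I)
  -- `1 ≤ length`
  have hlen1 : 1 ≤ moduleLength R (R ⧸ I) := by
    have : Nontrivial (R ⧸ I) :=
      Ideal.Quotient.nontrivial_iff.mpr hI
    have hbt : (⊥ : Submodule R (R ⧸ I)) < ⊤ := bot_lt_top
    let p : LTSeries (Submodule R (R ⧸ I)) :=
      (RelSeries.singleton {(a, b) : Submodule R (R ⧸ I) × Submodule R (R ⧸ I) | a < b} (⊥ : Submodule R (R ⧸ I))).snoc ⊤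
        (by simp)
    have hp : p.length = 1 := by simp [p, RelSeries.snoc, RelSeries.singleton]
    have := Order.LTSeries.length_le_krullDim p
    rw [hp] at this
    exact_mod_cast this
  constructor
  · rintro ⟨-, hQM⟩
    -- every ideal strictly between `I` and `⊤` is maximal
    have hmax : ∀ J : Ideal R, I < J → J ≠ ⊤ → J.IsMaximal := by
      intro J hIJ hJtop
      obtain ⟨a, haJ, haI⟩ := SetLike.exists_of_lt hIJ
      have hK : I ⊔ Ideal.span {a} ≤ J :=
        sup_le hIJ.le ((Ideal.span_le).2 (by simpa using haJ))
      rcases hQM a haI with h | h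
      · exact absurd (top_le_iff.1 (h ▸ hK)) hJtop
      · have : I ⊔ Ideal.span {a} = J := by
          by_contra hne
          exact hJtop (h.1.2 J (lt_of_le_of_ne hK hne))
        exact this ▸ h
    refine ⟨hlen1, ?_, ?_⟩
    · -- length ≤ 2
      rw [key]
      refine iSup_le fun p => ?_
      have hplen : p.length ≤ 2 := by
        by_contra hlen
        have h3 : 3 ≤ p.length := by omega
        have h01 : p ⟨0, by omega⟩ < p ⟨1, by omega⟩ := p.strictMono (Fin.mk_lt_mk.2 (by omega))
        have h12 : p ⟨1, by omega⟩ < p ⟨2, by omega⟩ :=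
          p.strictMono (Fin.mk_lt_mk.2 (by omega))
        have h23 : p ⟨2, by omega⟩ < p ⟨3, by omega⟩ :=
          p.strictMono (Fin.mk_lt_mk.2 (by omega))
        set J₁ := (p ⟨1, by omega⟩).1 with hJ₁
        set J₂ := (p ⟨2, by omega⟩).1 with hJ₂
        have hIJ₁ : I < J₁ := lt_of_le_of_lt (p ⟨0, by omega⟩).2 h01
        have hJ₁J₂ : J₁ < J₂ := h12
        have hJ₂top : J₂ ≠ ⊤ := by
          intro h
          exact absurd (le_top.trans_eq h.symm : (p ⟨3, by omega⟩).1 ≤ J₂)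
            (not_le_of_gt h23)
        have hJ₁top : J₁ ≠ ⊤ := ne_top_of_lt hJ₁J₂
        have hm := hmax J₁ hIJ₁ hJ₁top
        exact hJ₂top (hm.1.2 J₂ hJ₁J₂)
      exact_mod_cast hplen
    · -- at most two primes contain `I`
      set S := {P : Ideal R | P.IsPrime ∧ I ≤ P} with hS
      by_cases hex : ∃ M₁ M₂ : Ideal R, M₁ ∈ S ∧ M₂ ∈ S ∧ I < M₁ ∧ I < M₂ ∧ M₁ ≠ M₂
      · obtain ⟨M₁, M₂, hM₁, hM₂, hIM₁, hIM₂, hne⟩ := hex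
        have hM₁m : M₁.IsMaximal := hmax M₁ hIM₁ hM₁.1.ne_top
        have hM₂m : M₂.IsMaximal := hmax M₂ hIM₂ hM₂.1.ne_top
        -- I = M₁ ⊓ M₂
        have hinf : I = M₁ ⊓ M₂ := by
          by_contra h
          have hlt : I < M₁ ⊓ M₂ := lt_of_le_of_ne (le_inf hM₁.2 hM₂.2) h
          have h1 : M₁ ⊓ M₂ < M₁ := by
            refine lt_of_le_of_ne inf_le_left fun heq => hne ?_
            exact hM₁m.eq_of_le hM₂m.1.1 (heq ▸ inf_le_right)
          have := (hmax _ hlt (ne_top_of_lt h1)).1.2 M₁ h1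
          exact hM₁m.1.1 this
        have hsub : S ⊆ {M₁, M₂} := by
          rintro P ⟨hP, hIP⟩
          have : M₁ * M₂ ≤ P := (Ideal.mul_le_inf.trans (hinf ▸ hIP))
          rcases hP.mul_le.1 this with h | h
          · exact Or.inl (hM₁m.eq_of_le hP.ne_top h).symm
          · exact Or.inr (hM₂m.eq_of_le hP.ne_top h).symm
        calc S.encard ≤ ({M₁, M₂} : Set (Ideal R)).encard := Set.encard_le_encard hsub
          _ ≤ 2 := by
            refine (Set.encard_insert_le _ _).trans ?_
            rw [Set.encard_singleton]
            exact one_add_one_eq_two.le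
      · push_neg at hex
        by_cases hex2 : ∃ P₀ : Ideal R, P₀ ∈ S ∧ I < P₀
        · obtain ⟨P₀, hP₀, hIP₀⟩ := hex2
          have hsub : S ⊆ {I, P₀} := by
            rintro P ⟨hP, hIP⟩
            rcases eq_or_lt_of_le hIP with h | h
            · exact Or.inl h.symm
            · exact Or.inr (hex P P₀ ⟨hP, hIP⟩ hP₀ h hIP₀)
          calc S.encard ≤ ({I, P₀} : Set (Ideal R)).encard := Set.encard_le_encard hsub
            _ ≤ 2 := by
              refine (Set.encard_insert_le _ _).trans ?_
              rw [Set.encard_singleton]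
              exact one_add_one_eq_two.le
        · push_neg at hex2
          have hsub : S ⊆ {I} := by
            rintro P ⟨hP, hIP⟩
            rcases eq_or_lt_of_le hIP with h | h
            · exact h.symm
            · exact absurd h (hex2 P ⟨hP, hIP⟩)
          exact (Set.encard_le_encard hsub).trans (by simp)
  · rintro ⟨-, hlen2, -⟩
    refine ⟨hI, fun a ha => ?_⟩
    by_contra hcon
    push_neg at hcon
    obtain ⟨hKtop, hKmax⟩ := hcon
    set K := I ⊔ Ideal.span {a} with hK
    have haK : a ∈ K := Ideal.mem_sup_right (Ideal.mem_span_singleton_self a)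
    have hIK : I < K := lt_of_le_of_ne le_sup_left (fun h => ha (h ▸ haK))
    obtain ⟨M, hMmax, hKM⟩ := Ideal.exists_le_maximal K hKtop
    have hKMlt : K < M := lt_of_le_of_ne hKM (fun h => hKmax (h ▸ hMmax))
    have hMtop : M < ⊤ := lt_top_iff_ne_top.2 hMmax.1.1
    -- build a chain of length 3
    let q : LTSeries {J : Submodule R R // I ≤ J} :=
      (((RelSeries.singleton {(a, b) : {J : Submodule R R // I ≤ J} × {J : Submodule R R // I ≤ J} | a < b} (⟨I, le_rfl⟩ : {J : Submodule R R // I ≤ J})).snoc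
        ⟨K, le_sup_left⟩ (by simpa [RelSeries.last_singleton] using hIK)).snoc
        ⟨M, le_sup_left.trans hKM⟩ (by simpa using hKMlt)).snoc
        ⟨⊤, le_top⟩ (by simpa using hMtop)
    have hq : q.length = 3 := by simp [q, RelSeries.snoc, RelSeries.singleton]
    have h3 := Order.LTSeries.length_le_krullDim q
    rw [hq, ← key] at h3
    have : (3 : WithBot ℕ∞) ≤ 2 := le_trans (by exact_mod_cast h3) hlen2
    norm_num at this
end

section
/- Let I be a proper, non-maximal ideal of a commutative ring R. Then the following are equivalent: (1) I is quasi-maximal; (2) I is submaximal; (3) every proper ideal of R strictly containing I is a maximal ideal of R. -/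
/-- An ideal `I` is submaximal if some maximal ideal of `R` covers `I`. -/
def Ideal.Submaximal {R : Type*} [CommRing R] (I : Ideal R) : Prop :=
  ∃ M : Ideal R, M.IsMaximal ∧ I ⋖ M

/-- For a proper non-maximal ideal `I`, the following are equivalent:
quasi-maximal; submaximal; every proper ideal strictly containing `I` is maximal. -/
theorem quasiMaximal_iff_submaximal_iff {R : Type*} [CommRing R] (I : Ideal R)
    (hI : I ≠ ⊤) (hnm : ¬ I.IsMaximal) :
    (I.QuasiMaximal ↔ I.Submaximal) ∧
    (I.QuasiMaximal ↔ ∀ J : Ideal R, I < J → J ≠ ⊤ → J.IsMaximal) := by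
  -- (3) → (1)
  have h31 : (∀ J : Ideal R, I < J → J ≠ ⊤ → J.IsMaximal) → I.QuasiMaximal := by
    intro h3
    refine ⟨hI, fun a ha => ?_⟩
    by_cases h : I ⊔ Ideal.span {a} = ⊤
    · exact Or.inl h
    · refine Or.inr (h3 _ ?_ h)
      refine lt_of_le_of_ne le_sup_left fun heq => ha ?_
      rw [heq]
      exact Ideal.mem_sup_right (Ideal.subset_span rfl)
  -- (1) → (3)
  have h13 : I.QuasiMaximal → ∀ J : Ideal R, I < J → J ≠ ⊤ → J.IsMaximal := by
    intro hq J hlt hJ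
    obtain ⟨a, haJ, haI⟩ := SetLike.exists_of_lt hlt
    have hle : I ⊔ Ideal.span {a} ≤ J :=
      sup_le hlt.le (Ideal.span_le.mpr (Set.singleton_subset_iff.mpr haJ))
    rcases hq.2 a haI with h | h
    · exact absurd (top_le_iff.mp (h ▸ hle)) hJ
    · have heq := h.eq_of_le hJ hle
      rwa [heq] at h
  -- (3) → (2)
  have h32 : (∀ J : Ideal R, I < J → J ≠ ⊤ → J.IsMaximal) → I.Submaximal := by
    intro h3
    obtain ⟨M, hM, hle⟩ := Ideal.exists_le_maximal I hI
    have hlt : I < M := lt_of_le_of_ne hle fun h => hnm (h ▸ hM)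
    refine ⟨M, hM, hlt, fun c hIc hcM => ?_⟩
    have hc : c.IsMaximal := h3 c hIc (ne_top_of_lt hcM)
    exact hcM.ne (hc.eq_of_le hM.ne_top hcM.le)
  -- (2) → (3)
  have h23 : I.Submaximal → ∀ J : Ideal R, I < J → J ≠ ⊤ → J.IsMaximal := by
    rintro ⟨M, hM, hcov⟩ J hIJ hJ
    by_cases hJM : J ≤ M
    · rcases hcov.eq_or_eq hIJ.le hJM with h | h
      · exact absurd h hIJ.ne'
      · exact h ▸ hM
    · have hsup : M ⊔ J = ⊤ := hM.1.2 _ (left_lt_sup.mpr hJM)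
      constructor
      constructor
      · exact hJ
      · intro K hK
        rcases hcov.eq_or_eq (le_inf (hIJ.le.trans hK.le) hcov.1.le) inf_le_right with h | h
        · exfalso
          apply hK.ne'
          have : (J ⊔ M) ⊓ K = J ⊔ M ⊓ K := sup_inf_assoc_of_le M hK.le
          rw [sup_comm J M, hsup, top_inf_eq, inf_comm M K, h] at this
          rw [this, sup_eq_left.mpr hIJ.le]
        · rw [eq_top_iff, ← hsup]
          exact sup_le (h.symm.le.trans inf_le_left) hK.le
  have hq3 : I.QuasiMaximal ↔ ∀ J : Ideal R, I < J → J ≠ ⊤ → J.IsMaximal := ⟨h13, h31⟩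
  exact ⟨hq3.trans ⟨h32, fun h => h23 h⟩, hq3⟩
end

section
/- An ideal I of a commutative ring R is ramified if and only if the quotient ring R/I is a local principal ideal ring whose maximal ideal m is nonzero and satisfies m² = 0. -/
/-- An ideal is ramified if it is ramified at some maximal ideal. -/
def Ideal.Ramified {R : Type*} [CommRing R] (I : Ideal R) : Prop :=
  ∃ M : Ideal R, M.IsMaximal ∧ I.RamifiedAt M

/-- An ideal `I` is ramified iff `R/I` is a local principal ideal ring whose
(unique) maximal ideal `m` is nonzero and satisfies `m² = 0`. -/
theorem ramified_iff_quotient_spir {R : Type*} [CommRing R] (I : Ideal R) :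
    I.Ramified ↔
      IsPrincipalIdealRing (R ⧸ I) ∧
        ∃ m : Ideal (R ⧸ I), m.IsMaximal ∧ (∀ m' : Ideal (R ⧸ I), m'.IsMaximal → m' = m) ∧
          m ≠ ⊥ ∧ m ^ 2 = ⊥ := by
  set f := Ideal.Quotient.mk I with hf
  have hsurj : Function.Surjective f := Ideal.Quotient.mk_surjective
  have hker : RingHom.ker f = I := Ideal.mk_ker
  constructor
  · rintro ⟨M, hMmax, hprim, hrad, hsq, hlt, hspan⟩
    set m : Ideal (R ⧸ I) := M.map f with hmdef
    have hIM : I ≤ M := hlt.le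
    have hcm : Ideal.comap f m = M := by
      rw [hmdef, Ideal.comap_map_of_surjective f hsurj, ← RingHom.ker_eq_comap_bot, hker,
        sup_eq_left.mpr hIM]
    have hmmax : m.IsMaximal := by
      rcases Ideal.map_eq_top_or_isMaximal_of_surjective f hsurj hMmax with h | h
      · exfalso
        apply hMmax.ne_top
        rw [← hcm, hmdef, h, Ideal.comap_top]
      · exact h
    -- uniqueness of maximal ideals
    have huniq : ∀ m' : Ideal (R ⧸ I), m'.IsMaximal → m' = m := by
      intro m' hm'
      have hIc : I ≤ Ideal.comap f m' := by
        intro x hx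
        simp [Ideal.mem_comap, hf, Ideal.Quotient.eq_zero_iff_mem.mpr hx]
      haveI := hm'.isPrime
      have hpc : (Ideal.comap f m').IsPrime := Ideal.IsPrime.comap f
      have hMc : M ≤ Ideal.comap f m' := by
        rw [← hrad, ← hpc.radical]
        exact Ideal.radical_mono hIc
      have hcne : Ideal.comap f m' ≠ ⊤ := by
        intro h
        exact hm'.ne_top (by simpa [Ideal.eq_top_iff_one, Ideal.mem_comap] using h)
      have : Ideal.comap f m' = M := (hMmax.eq_of_le hcne hMc).symm ▸ rfl
      calc m' = Ideal.map f (Ideal.comap f m') := (Ideal.map_comap_of_surjective f hsurj m').symm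
        _ = Ideal.map f M := by rw [this]
        _ = m := rfl
    -- m ≠ ⊥
    obtain ⟨a, haM, haI⟩ := SetLike.exists_of_lt hlt
    have hmne : m ≠ ⊥ := by
      intro h
      have : f a ∈ m := Ideal.mem_map_of_mem f haM
      rw [h, Ideal.mem_bot] at this
      exact haI (Ideal.Quotient.eq_zero_iff_mem.mp this)
    -- m ^ 2 = ⊥
    have hm2 : m ^ 2 = ⊥ := by
      rw [hmdef, ← Ideal.map_pow, eq_bot_iff, Ideal.map_le_iff_le_comap]
      intro x hx
      simp [Ideal.mem_comap, Ideal.mem_bot, hf, Ideal.Quotient.eq_zero_iff_mem.mpr (hsq hx)]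
    -- any nonzero element of m generates m
    have hgen : ∀ x : R ⧸ I, x ∈ m → x ≠ 0 → m = Ideal.span {x} := by
      intro x hx hx0
      obtain ⟨b, rfl⟩ := hsurj x
      have hbM : b ∈ M := by rw [← hcm]; exact hx
      have hbI : b ∉ I := fun h => hx0 (Ideal.Quotient.eq_zero_iff_mem.mpr h)
      have := hspan b hbM hbI
      calc m = Ideal.map f M := rfl
        _ = Ideal.map f (I ⊔ Ideal.span {b}) := by rw [← this]
        _ = Ideal.map f I ⊔ Ideal.map f (Ideal.span {b}) := Ideal.map_sup _ _ _
        _ = ⊥ ⊔ Ideal.span {f b} := by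
              rw [Ideal.map_quotient_self, Ideal.map_span, Set.image_singleton]
        _ = Ideal.span {f b} := bot_sup_eq _
    refine ⟨⟨fun J => ?_⟩, m, hmmax, huniq, hmne, hm2⟩
    by_cases hJb : J = ⊥
    · exact ⟨⟨0, by rw [hJb]; exact (Ideal.span_singleton_eq_bot.mpr rfl).symm⟩⟩
    by_cases hJt : J = ⊤
    · exact ⟨⟨1, by simp [hJt, Ideal.span_singleton_one]⟩⟩
    obtain ⟨x, hxJ, hx0⟩ := Submodule.exists_mem_ne_zero_of_ne_bot hJb
    obtain ⟨mx, hmx, hJmx⟩ := Ideal.exists_le_maximal J hJt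
    rw [huniq mx hmx] at hJmx
    have : m = Ideal.span {x} := hgen x (hJmx hxJ) hx0
    refine ⟨⟨x, ?_⟩⟩
    exact le_antisymm (le_trans hJmx (le_of_eq this)) ((Ideal.span_singleton_le_iff_mem J).mpr hxJ)
  · rintro ⟨hPIR, m, hmmax, huniq, hmne, hm2⟩
    haveI : Nontrivial (R ⧸ I) := by
      by_contra h
      rw [not_nontrivial_iff_subsingleton] at h
      exact hmmax.ne_top (Subsingleton.elim _ _)
    -- every nonunit is in m
    have hnonunit : ∀ x : R ⧸ I, ¬ IsUnit x → x ∈ m := by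
      intro x hx
      obtain ⟨mx, hmx, hxmx⟩ := exists_max_ideal_of_mem_nonunits hx
      rwa [huniq mx hmx] at hxmx
    -- radical ⊥ = m
    have hradbot : Ideal.radical (⊥ : Ideal (R ⧸ I)) = m := by
      refine le_antisymm ?_ ?_
      · have : (⊥ : Ideal (R ⧸ I)) ≤ m := bot_le
        calc Ideal.radical ⊥ ≤ Ideal.radical m := Ideal.radical_mono this
          _ = m := hmmax.isPrime.radical
      · intro x hx
        refine ⟨2, ?_⟩
        have : x ^ 2 ∈ m ^ 2 := Ideal.pow_mem_pow hx 2
        rwa [hm2] at this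
    set M : Ideal R := Ideal.comap f m with hMdef
    have hMmax : M.IsMaximal := Ideal.comap_isMaximal_of_surjective f hsurj
    have hradI : I.radical = M := by
      rw [hMdef, ← hradbot, Ideal.comap_radical]
      congr 1
      rw [← RingHom.ker_eq_comap_bot, hker]
    have hIneTop : I ≠ ⊤ := by
      intro h
      have : (1 : R ⧸ I) = 0 := by
        have : (1 : R) ∈ I := h ▸ Submodule.mem_top
        simpa [hf] using Ideal.Quotient.eq_zero_iff_mem.mpr this
      exact one_ne_zero this
    have hprim : I.IsPrimary := by
      rw [Ideal.isPrimary_iff]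
      refine ⟨hIneTop, fun {x y} hxy => ?_⟩
      by_cases hy : f y ∈ m
      · right; rw [hradI]; exact hy
      · left
        have hu : IsUnit (f y) := by
          by_contra h
          exact hy (hnonunit _ h)
        have h0 : f x * f y = 0 := by
          rw [← map_mul]
          exact Ideal.Quotient.eq_zero_iff_mem.mpr hxy
        have : f x = 0 := by
          obtain ⟨u, hu⟩ := hu
          have := congrArg (· * (↑u⁻¹ : R ⧸ I)) h0
          simpa [← hu, mul_assoc] using this
        exact Ideal.Quotient.eq_zero_iff_mem.mp this
    have hsq : M ^ 2 ≤ I := by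
      rw [pow_two, Ideal.mul_le]
      intro a ha b hb
      have : f (a * b) ∈ m ^ 2 := by
        rw [map_mul, pow_two]
        exact Ideal.mul_mem_mul ha hb
      rw [hm2, Ideal.mem_bot] at this
      exact Ideal.Quotient.eq_zero_iff_mem.mp this
    have hIM : I ≤ M := fun x hx => by
      simp only [hMdef, Ideal.mem_comap]
      rw [hf, Ideal.Quotient.eq_zero_iff_mem.mpr hx]
      exact m.zero_mem
    have hlt : I < M := by
      refine lt_of_le_of_ne hIM fun h => ?_
      apply hmne
      rw [eq_bot_iff]
      intro x hx
      obtain ⟨a, rfl⟩ := hsurj x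
      have : a ∈ M := hx
      rw [← h] at this
      simpa [Ideal.mem_bot, hf] using Ideal.Quotient.eq_zero_iff_mem.mpr this
    refine ⟨M, hMmax, hprim, hradI, hsq, hlt, fun a haM haI => ?_⟩
    -- span condition
    obtain ⟨b, hb⟩ := (hPIR.principal m).principal
    have hfa : f a ∈ m := haM
    have hfa0 : f a ≠ 0 := fun h => haI (Ideal.Quotient.eq_zero_iff_mem.mp h)
    rw [hb] at hfa
    obtain ⟨c, hc⟩ := Ideal.mem_span_singleton'.mp hfa
    have hcu : IsUnit c := by
      by_contra h
      have hcm : c ∈ m := hnonunit c h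
      have hbm : b ∈ m := by rw [hb]; exact Ideal.mem_span_singleton_self b
      have : c * b ∈ m ^ 2 := by rw [pow_two]; exact Ideal.mul_mem_mul hcm hbm
      rw [hm2, Ideal.mem_bot, hc] at this
      exact hfa0 this
    have hmspan : m = Ideal.span {f a} := by
      rw [hb, ← hc]
      exact (Ideal.span_singleton_mul_left_unit hcu b).symm
    have : Ideal.map f (Ideal.span {a}) = m := by
      rw [Ideal.map_span, Set.image_singleton, hmspan]
    calc M = Ideal.comap f m := rfl
      _ = Ideal.comap f (Ideal.map f (Ideal.span {a})) := by rw [this]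
      _ = Ideal.span {a} ⊔ Ideal.comap f ⊥ := Ideal.comap_map_of_surjective f hsurj _
      _ = I ⊔ Ideal.span {a} := by
            rw [← RingHom.ker_eq_comap_bot, hker, sup_comm]
end

section
/- Let I be a quasi-maximal ideal of a commutative ring R. Then R/I is a Kasch ring: every maximal ideal of R/I is the annihilator (0 : x) of some element x of R/I. Consequently, every non-zero-divisor of R/I is a unit, i.e. the total quotient ring of R/I equals R/I. -/
/-- If `I` is quasi-maximal, then `R/I` is a Kasch ring (every maximal ideal of `R/I`
is the annihilator of an element), and every non-zero-divisor of `R/I` is a unit. -/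
theorem quotient_kasch_of_quasiMaximal {R : Type*} [CommRing R] (I : Ideal R)
    (hI : I.QuasiMaximal) :
    (∀ M : Ideal (R ⧸ I), M.IsMaximal → ∃ x : R ⧸ I, ∀ a : R ⧸ I, a ∈ M ↔ a * x = 0) ∧
    (∀ y : R ⧸ I, y ∈ nonZeroDivisors (R ⧸ I) → IsUnit y) := by
  have hsurj : Function.Surjective (Ideal.Quotient.mk I) := Ideal.Quotient.mk_surjective
  have kasch : ∀ M : Ideal (R ⧸ I), M.IsMaximal → ∃ x : R ⧸ I, ∀ a : R ⧸ I, a ∈ M ↔ a * x = 0 := by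
    intro M hM
    set J : Ideal R := M.comap (Ideal.Quotient.mk I) with hJ
    have hJmax : J.IsMaximal := Ideal.comap_isMaximal_of_surjective _ hsurj
    have hIJ : I ≤ J := by
      intro i hi
      simp [hJ, Ideal.Quotient.eq_zero_iff_mem.mpr hi]
    have hmem : ∀ b : R, (Ideal.Quotient.mk I b) ∈ M ↔ b ∈ J := fun b => Iff.rfl
    by_cases hcase : J ≤ I
    · -- M = ⊥, take x = 1
      refine ⟨1, fun a => ?_⟩
      obtain ⟨b, rfl⟩ := hsurj a
      rw [mul_one, hmem, Ideal.Quotient.eq_zero_iff_mem]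
      exact ⟨fun h => hcase h, fun h => hIJ h⟩
    · obtain ⟨a, haJ, haI⟩ := SetLike.not_le_iff_exists.mp hcase
      have hspan : I ⊔ Ideal.span {a} ≤ J :=
        sup_le hIJ ((Ideal.span_singleton_le_iff_mem _).mpr haJ)
      have hJa : I ⊔ Ideal.span {a} = J := by
        rcases hI.2 a haI with h | h
        · exact absurd (top_le_iff.mp (h ▸ hspan)) hJmax.ne_top
        · exact h.eq_of_le hJmax.ne_top hspan
      -- find x ∉ I with x * a ∈ I
      obtain ⟨x, hxI, hxa⟩ : ∃ x : R, x ∉ I ∧ x * a ∈ I := by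
        by_cases hsq : a * a ∈ I
        · exact ⟨a, haI, hsq⟩
        · have hspan2 : I ⊔ Ideal.span {a * a} ≤ J :=
            sup_le hIJ ((Ideal.span_singleton_le_iff_mem _).mpr (J.mul_mem_left a haJ))
          have hJa2 : I ⊔ Ideal.span {a * a} = J := by
            rcases hI.2 (a * a) hsq with h | h
            · exact absurd (top_le_iff.mp (h ▸ hspan2)) hJmax.ne_top
            · exact h.eq_of_le hJmax.ne_top hspan2
          have haJ' : a ∈ I ⊔ Ideal.span {a * a} := hJa2 ▸ haJ
          rw [Submodule.mem_sup] at haJ'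
          obtain ⟨i, hi, z, hz, hiz⟩ := haJ'
          obtain ⟨r, rfl⟩ := Ideal.mem_span_singleton'.mp hz
          refine ⟨1 - r * a, ?_, ?_⟩
          · intro h1
            have h2 : (1 - r * a) + r * a = 1 := by ring
            have : (1 : R) ∈ I ⊔ Ideal.span {a} :=
              h2 ▸ Submodule.add_mem_sup h1 (Ideal.mem_span_singleton'.mpr ⟨r, rfl⟩)
            rw [hJa] at this
            exact hJmax.ne_top ((Ideal.eq_top_iff_one J).mpr this)
          · have : (1 - r * a) * a = i := by linear_combination -hiz
            rw [this]; exact hi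
      -- M is the annihilator of mk x
      have hxI' : (Ideal.Quotient.mk I x) ≠ 0 := fun h => hxI (Ideal.Quotient.eq_zero_iff_mem.mp h)
      refine ⟨Ideal.Quotient.mk I x, fun b => ?_⟩
      have fwd : ∀ b : R ⧸ I, b ∈ M → b * Ideal.Quotient.mk I x = 0 := by
        intro b hb
        obtain ⟨c, rfl⟩ := hsurj b
        have hc : c ∈ J := (hmem c).mp hb
        rw [← hJa, Submodule.mem_sup] at hc
        obtain ⟨i, hi, z, hz, hiz⟩ := hc
        obtain ⟨r, rfl⟩ := Ideal.mem_span_singleton'.mp hz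
        rw [← map_mul, Ideal.Quotient.eq_zero_iff_mem, ← hiz]
        have : (i + r * a) * x = i * x + r * (x * a) := by ring
        rw [this]
        exact I.add_mem (I.mul_mem_right x hi) (I.mul_mem_left r hxa)
      refine ⟨fwd b, fun h0 => ?_⟩
      by_contra hbM
      obtain ⟨c, i, hiM, hci⟩ := hM.exists_inv hbM
      have : Ideal.Quotient.mk I x = (c * b + i) * Ideal.Quotient.mk I x := by rw [hci, one_mul]
      rw [add_mul, mul_assoc, h0, fwd _ hiM] at this
      simp at this
      exact hxI' this
  refine ⟨kasch, fun y hy => ?_⟩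
  by_contra hyu
  have : Nontrivial (R ⧸ I) := Ideal.Quotient.nontrivial_iff.mpr hI.1
  have hne : Ideal.span {y} ≠ ⊤ := fun h => hyu (Ideal.span_singleton_eq_top.mp h)
  obtain ⟨M, hM, hyM⟩ := Ideal.exists_le_maximal _ hne
  obtain ⟨x, hx⟩ := kasch M hM
  have hyx : y * x = 0 := (hx y).mp (hyM (Ideal.mem_span_singleton_self y))
  have hx0 : x ≠ 0 := by
    intro h
    have : (1 : R ⧸ I) ∈ M := (hx 1).mpr (by simp [h])
    exact hM.ne_top ((Ideal.eq_top_iff_one M).mpr this)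
  exact hx0 (mem_nonZeroDivisors_iff_right.mp hy x (by rw [mul_comm]; exact hyx))
end

section
/- Let R be a commutative ring that is not a field, and let M be a finitely generated maximal ideal of R. Then there exists a quasi-maximal ideal I of R with I ⊊ M. -/
/-- If `R` is not a field and `M` is a finitely generated maximal ideal of `R`, then
there is a quasi-maximal ideal strictly contained in `M`. -/
theorem exists_quasiMaximal_lt_of_fg {R : Type*} [CommRing R] (hF : ¬ IsField R)
    (M : Ideal R) (hM : M.IsMaximal) (hfg : M.FG) :
    ∃ I : Ideal R, I.QuasiMaximal ∧ I < M := by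
  -- M ≠ ⊥
  have hM0 : M ≠ ⊥ := by
    rintro rfl
    apply hF
    haveI hnt : Nontrivial R :=
      not_subsingleton_iff_nontrivial.mp (fun _ => hM.ne_top (Subsingleton.elim _ _))
    refine ⟨exists_pair_ne R, mul_comm, fun {a} ha => ?_⟩
    have h1 : (⊥ : Ideal R) < Ideal.span {a} := by
      rw [bot_lt_iff_ne_bot, ne_eq, Ideal.span_singleton_eq_bot]
      exact ha
    have h2 : Ideal.span {a} = ⊤ := hM.out.2 _ h1
    obtain ⟨b, hb⟩ := (Ideal.span_singleton_eq_top.mp h2).exists_right_inv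
    exact ⟨b, hb⟩
  -- M is a compact element, so [⊥, M] is coatomic
  have hcomp : IsCompactElement M :=
    (Submodule.fg_iff_compact M).mp hfg
  have hcoat : IsCoatomic (Set.Iic M) :=
    CompleteLattice.Iic_coatomic_of_compact_element hcomp
  rcases hcoat.eq_top_or_exists_le_coatom (⟨⊥, Set.mem_Iic.mpr bot_le⟩ : Set.Iic M) with h | ⟨I, hI, -⟩
  · exact absurd (congrArg Subtype.val h).symm hM0
  -- extract the key property of the coatom
  have hIle : I.1 ≤ M := I.2
  have hIne : I.1 ≠ M := fun h => hI.1 (Subtype.ext (by simpa using h))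
  have key : ∀ J : Ideal R, J ≤ M → I.1 < J → J = M := by
    intro J hJ hlt
    have := hI.2 ⟨J, hJ⟩ (Subtype.mk_lt_mk.mpr hlt)
    simpa using congrArg Subtype.val this
  have hIM : I.1 < M := lt_of_le_of_ne hIle hIne
  refine ⟨I.1, ⟨ne_top_of_lt hIM, ?_⟩, hIM⟩
  intro a haI
  set J := I.1 ⊔ Ideal.span {a} with hJdef
  have haJ : a ∈ J := Submodule.mem_sup_right (Ideal.mem_span_singleton_self a)
  have hIJ : I.1 < J := lt_of_le_of_ne le_sup_left (fun h => haI (h ▸ haJ))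
  by_cases haM : a ∈ M
  · -- J ≤ M and I < J, so J = M, which is maximal
    have hJM : J ≤ M := sup_le hIle (Ideal.span_le.mpr (by simpa using haM))
    have : J = M := key J hJM hIJ
    exact Or.inr (this ▸ hM)
  · by_cases hMJ : M ≤ J
    · -- M < J, so J = ⊤
      left
      exact hM.out.2 J (lt_of_le_of_ne hMJ (fun h => haM (h ▸ haJ)))
    · right
      -- J ⊓ M = I
      have hIJM : I.1 ≤ J ⊓ M := le_inf hIJ.le hIle
      have hKI : J ⊓ M = I.1 := by
        by_contra hne
        have : J ⊓ M = M := key _ inf_le_right (lt_of_le_of_ne hIJM (Ne.symm hne))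
        exact hMJ (le_trans this.symm.le inf_le_left)
      -- J ⊔ M = ⊤
      have hJMtop : J ⊔ M = ⊤ := by
        apply hM.out.2
        refine lt_of_le_of_ne le_sup_right (fun h => haM ?_)
        exact h ▸ (le_sup_left : J ≤ J ⊔ M) haJ
      have hJne : J ≠ ⊤ := by
        intro h
        rw [h, top_inf_eq] at hKI
        exact hIne hKI.symm
      refine ⟨⟨hJne, fun x hx => ?_⟩⟩
      -- x strictly contains J; show x = ⊤
      have hJx : J ≤ x := hx.le
      rcases eq_or_lt_of_le (le_inf (hIJ.le.trans hJx) hIle : I.1 ≤ x ⊓ M) with heq | hlt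
      · -- x ⊓ M = I ≤ J : modularity gives x = J, contradiction
        exfalso
        have hmod : (J ⊔ M) ⊓ x = J ⊔ (M ⊓ x) := sup_inf_assoc_of_le M hJx
        rw [hJMtop, top_inf_eq, inf_comm M x, ← heq] at hmod
        rw [sup_eq_left.mpr hIJ.le] at hmod
        exact hx.ne' hmod
      · -- I < x ⊓ M, so x ⊓ M = M, so M ≤ x, and a ∈ x with a ∉ M
        have hxM : x ⊓ M = M := key _ inf_le_right hlt
        have hMx : M ≤ x := hxM ▸ inf_le_left
        exact hM.out.2 x (lt_of_le_of_ne hMx (fun h => haM (h ▸ hJx haJ)))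
end

section
/- Let R be a commutative ring, M a finitely generated maximal ideal of R, and J an ideal of R with J ⊊ M. Then there exists a quasi-maximal ideal I of R with J ⊆ I ⊊ M. -/
/-- If `M` is a finitely generated maximal ideal and `J ⊊ M`, then there is a
quasi-maximal ideal `I` with `J ⊆ I ⊊ M`. -/
theorem exists_quasiMaximal_between {R : Type*} [CommRing R]
    (M : Ideal R) (hM : M.IsMaximal) (hfg : M.FG) (J : Ideal R) (hJ : J < M) :
    ∃ I : Ideal R, I.QuasiMaximal ∧ J ≤ I ∧ I < M := by
  have hMcompact : IsCompactElement M :=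
    (Submodule.fg_iff_compact M).mp hfg
  -- Zorn's lemma on the set of ideals `K` with `J ≤ K < M`.
  set S : Set (Ideal R) := {K | J ≤ K ∧ K < M} with hS
  obtain ⟨I, hJI, ⟨hIJ, hIM⟩, hImax⟩ :=
    zorn_le_nonempty₀ S (fun c hcS hc y hy => by
      refine ⟨sSup c, ⟨le_trans (hcS hy).1 (le_sSup hy), ?_⟩, fun z hz => le_sSup hz⟩
      exact CompleteLattice.IsCompactElement.directed_sSup_lt_of_lt hMcompact ⟨y, hy⟩ hc.directedOn
        (fun x hx => (hcS hx).2)) J ⟨le_rfl, hJ⟩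
  have heqI : ∀ K : Ideal R, J ≤ K → K < M → I ≤ K → K = I :=
    fun K h1 h2 h3 => le_antisymm (hImax ⟨h1, h2⟩ h3) h3
  refine ⟨I, ⟨?_, ?_⟩, hJI, hIM⟩
  · exact ne_top_of_lt (hIM.trans_le le_top)
  intro a ha
  by_cases haM : a ∈ M
  · -- `I ⊔ span {a} ≤ M` and strictly contains `I`, so by maximality it equals `M`.
    right
    have hle : I ⊔ Ideal.span {a} ≤ M :=
      sup_le hIM.le ((Ideal.span_singleton_le_iff_mem M).mpr haM)
    rcases lt_or_eq_of_le hle with hlt | heq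
    · exfalso
      have h2 : I ⊔ Ideal.span {a} = I :=
        heqI _ (le_trans hJI le_sup_left) hlt le_sup_left
      exact ha (h2 ▸ Ideal.mem_sup_right (Ideal.mem_span_singleton_self a))
    · exact heq ▸ hM
  · -- `a ∉ M`.  Let `N = I ⊔ span {a}`.
    set N := I ⊔ Ideal.span {a} with hN
    have haN : a ∈ N := Ideal.mem_sup_right (Ideal.mem_span_singleton_self a)
    have hMN : M ⊔ N = ⊤ := by
      refine hM.1.2 (M ⊔ N) (lt_of_le_of_ne le_sup_left fun h => haM ?_)
      exact h ▸ Ideal.mem_sup_right haN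
    by_cases hMleN : M ≤ N
    · left
      rw [eq_top_iff, ← hMN]
      exact sup_le hMleN le_rfl
    · right
      -- `N ⊓ M` lies in `S` and contains `I`, so it equals `I`.
      have hNM : N ⊓ M = I :=
        heqI _ (le_trans hJI (le_inf le_sup_left hIM.le))
          (lt_of_le_of_ne inf_le_right fun h => hMleN (h ▸ inf_le_left))
          (le_inf le_sup_left hIM.le)
      have hNne : N ≠ ⊤ := by
        intro h
        rw [h, top_inf_eq] at hNM
        exact hIM.ne hNM.symm
      refine ⟨⟨hNne, fun K hK => ?_⟩⟩
      -- For any `K > N`, pick `b ∈ K \ N`; show `N ⊔ span {b} = ⊤`, hence `K = ⊤`.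
      obtain ⟨b, hbK, hbN⟩ := SetLike.exists_of_lt hK
      -- write `1 = m + n` with `m ∈ M`, `n ∈ N`
      have h1 : (1 : R) ∈ M ⊔ N := hMN ▸ Submodule.mem_top
      obtain ⟨m, hm, n, hn, hmn⟩ := Submodule.mem_sup.mp h1
      -- Claim: `M ≤ N ⊔ span {b}`.
      have hMle : M ≤ N ⊔ Ideal.span {b} := by
        by_contra hcon
        -- otherwise `(N ⊔ span b) ⊓ M = I`, which forces `b ∈ N`.
        have hmem : (N ⊔ Ideal.span {b}) ⊓ M = I :=
          heqI _ (le_trans hJI (le_inf (le_sup_left.trans le_sup_left) hIM.le))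
            (lt_of_le_of_ne inf_le_right fun h => hcon (h ▸ inf_le_left))
            (le_inf (le_sup_left.trans le_sup_left) hIM.le)
        have hbm : b * m ∈ (N ⊔ Ideal.span {b}) ⊓ M := by
          refine Submodule.mem_inf.mpr ⟨?_, Ideal.mul_mem_left M b hm⟩
          exact Ideal.mem_sup_right (Ideal.mul_mem_right m _ (Ideal.mem_span_singleton_self b))
        have hbmI : b * m ∈ I := hmem ▸ hbm
        have hbn : b * n ∈ N := Ideal.mul_mem_left N b hn
        have hb : b * m + b * n = b := by rw [← mul_add, hmn, mul_one]
        exact hbN (hb ▸ N.add_mem (Ideal.mem_sup_left hbmI) hbn)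
      -- then `N ⊔ span {b} ≥ M ⊔ N = ⊤`, and `N ⊔ span {b} ≤ K`.
      have htop : N ⊔ Ideal.span {b} = ⊤ := by
        rw [eq_top_iff, ← hMN]
        exact sup_le hMle le_sup_left
      rw [eq_top_iff, ← htop]
      exact sup_le hK.le ((Ideal.span_singleton_le_iff_mem K).mpr hbK)
end

section
/- Let R be a commutative ring, M a maximal ideal of R, and J an M-primary ideal of R such that the length of M/J as an R-module satisfies 1 ≤ length_R(M/J) < ∞. Then there exists a ramified ideal I of R with J ⊆ I ⊊ M. -/
lemma wellFoundedGT_of_krullDim_lt_top {α : Type*} [Preorder α]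
    (h : Order.krullDim α < ⊤) : WellFounded ((· > ·) : α → α → Prop) := by
  rw [RelEmbedding.wellFounded_iff_isEmpty]
  constructor
  intro f
  have hf : StrictMono fun n : ℕ => f n := fun a b hab => f.map_rel_iff.mpr hab
  have : InfiniteDimensionalOrder ℕ :=
    ⟨fun n => ⟨LTSeries.mk n (fun i => (i : ℕ)) (fun _ _ h => h), rfl⟩⟩
  have : InfiniteDimensionalOrder α :=
    infiniteDimensionalOrder_of_strictMono _ hf
  exact absurd Order.krullDim_eq_top h.ne

/-- If `J` is an `M`-primary ideal (`M` maximal) with `1 ≤ length_R(M/J) < ∞`, then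
there exists a ramified ideal `I` with `J ⊆ I ⊊ M`. -/
theorem exists_ramified_between {R : Type*} [CommRing R]
    (M : Ideal R) (hM : M.IsMaximal) (J : Ideal R)
    (hJpr : J.IsPrimary) (hJrad : J.radical = M)
    (h1 : 1 ≤ moduleLength R (↥M ⧸ Submodule.comap M.subtype J))
    (h2 : moduleLength R (↥M ⧸ Submodule.comap M.subtype J) < ⊤) :
    ∃ I : Ideal R, I.Ramified ∧ J ≤ I ∧ I < M := by
  classical
  set J' : Submodule R ↥M := Submodule.comap M.subtype J with hJ'
  set Q := ↥M ⧸ J'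
  -- the submodule lattice of Q is coatomic
  have hwf : WellFounded ((· > ·) : Submodule R Q → Submodule R Q → Prop) :=
    wellFoundedGT_of_krullDim_lt_top h2
  have hcoa : IsCoatomic (Submodule R Q) := isCoatomic_of_orderTop_gt_wellFounded hwf
  -- ⊥ ≠ ⊤
  have hbotne : (⊥ : Submodule R Q) ≠ ⊤ := by
    intro hbt
    have : Subsingleton Q := by
      constructor
      intro a b
      have ha : a ∈ (⊥ : Submodule R Q) := hbt ▸ Submodule.mem_top
      have hb : b ∈ (⊥ : Submodule R Q) := hbt ▸ Submodule.mem_top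
      rw [Submodule.mem_bot] at ha hb
      rw [ha, hb]
    have : Subsingleton (Submodule R Q) := by
      constructor
      intro a b
      ext x
      simp [Subsingleton.elim x 0]
    have h0 : Order.krullDim (Submodule R Q) ≤ 0 := Order.krullDim_nonpos_of_subsingleton
    have : (1 : WithBot ℕ∞) ≤ 0 := le_trans h1 h0
    norm_num at this
  obtain ⟨P, hP, -⟩ := (hcoa.eq_top_or_exists_le_coatom ⊥).resolve_left hbotne
  -- pull back the coatom to an ideal I
  set I' : Submodule R ↥M := Submodule.comap J'.mkQ P with hI'
  set I : Ideal R := Submodule.map M.subtype I' with hIdef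
  have hmkQsurj : Function.Surjective J'.mkQ := Submodule.mkQ_surjective J'
  have hker : J' ≤ I' := by
    intro x hx
    have hx0 : J'.mkQ x = 0 := (Submodule.Quotient.mk_eq_zero J').mpr hx
    show J'.mkQ x ∈ P
    rw [hx0]; exact P.zero_mem
  -- J ≤ I
  have hJM : J ≤ M := hJrad ▸ Ideal.le_radical
  have hJI : J ≤ I := by
    intro x hx
    exact ⟨⟨x, hJM hx⟩, hker hx, rfl⟩
  -- I ≤ M and I ≠ M
  have hIM : I ≤ M := by
    rintro x ⟨y, -, rfl⟩
    exact y.2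
  have hI'top : I' ≠ ⊤ := by
    intro htop
    have : P = ⊤ := by
      have := Submodule.map_comap_eq_of_surjective hmkQsurj P
      rw [← this, ← hI', htop, Submodule.map_top, Submodule.range_mkQ]
    exact hP.1 this
  have hIne : I ≠ M := by
    intro hIM'
    apply hI'top
    have hinj : Function.Injective M.subtype := Subtype.val_injective
    apply Submodule.map_injective_of_injective hinj
    rw [← hIdef, hIM', Submodule.map_subtype_top]
  have hIltM : I < M := lt_of_le_of_ne hIM hIne
  -- key coatom property: any ideal strictly between I and M is impossible
  have hcoatom : ∀ K : Ideal R, I < K → K ≤ M → K = M := by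
    intro K hIK hKM
    set K' : Submodule R ↥M := Submodule.comap M.subtype K with hK'
    have hI'K' : I' ≤ K' := by
      intro x hx
      have : (x : R) ∈ I := ⟨x, hx, rfl⟩
      exact hIK.le this
    have hmapK' : Submodule.map M.subtype K' = K := by
      rw [hK', Submodule.map_comap_subtype, inf_eq_right.mpr hKM]
    have hI'K'ne : I' ≠ K' := by
      intro he
      apply hIK.ne
      rw [hIdef, he, hmapK']
    have hkerK' : J' ≤ K' := le_trans hker hI'K'
    have hPmap : P ≤ Submodule.map J'.mkQ K' := by
      have := Submodule.map_comap_eq_of_surjective hmkQsurj P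
      rw [← this]
      exact Submodule.map_mono hI'K'
    have hPne : P ≠ Submodule.map J'.mkQ K' := by
      intro he
      apply hI'K'ne
      rw [hI', he, Submodule.comap_map_mkQ, sup_eq_right.mpr hkerK']
    have htop : Submodule.map J'.mkQ K' = ⊤ := hP.2 _ (lt_of_le_of_ne hPmap hPne)
    have hK'top : K' = ⊤ := by
      have := Submodule.comap_map_mkQ J' K'
      rw [htop, Submodule.comap_top, sup_eq_right.mpr hkerK'] at this
      exact this.symm
    rw [← hmapK', hK'top, Submodule.map_subtype_top]
  -- radical of I is M
  have hIrad : I.radical = M := by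
    apply le_antisymm
    · calc I.radical ≤ M.radical := Ideal.radical_mono hIM
        _ = M := hM.isPrime.radical
    · rw [← hJrad]
      exact Ideal.radical_mono hJI
  have hIprimary : I.IsPrimary := Ideal.isPrimary_of_isMaximal_radical (hIrad ▸ hM)
  -- the "M = I + Ra" property
  have hsup : ∀ a ∈ M, a ∉ I → M = I ⊔ Ideal.span {a} := by
    intro a haM haI
    have h1' : I < I ⊔ Ideal.span {a} := by
      refine lt_of_le_of_ne le_sup_left ?_
      intro he
      apply haI
      rw [he]
      exact Submodule.mem_sup_right (Ideal.mem_span_singleton_self a)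
    have h2' : I ⊔ Ideal.span {a} ≤ M :=
      sup_le hIM ((Ideal.span_singleton_le_iff_mem M).mpr haM)
    exact (hcoatom _ h1' h2').symm
  -- M² ⊆ I
  have hsq : M ^ 2 ≤ I := by
    rw [pow_two, Ideal.mul_le]
    intro x hx y hy
    by_contra hxy
    have hMeq := hsup (x * y) (M.mul_mem_right y hx) hxy
    -- write y = i + r * (x*y)
    have hy' : y ∈ I ⊔ Ideal.span {x * y} := hMeq ▸ hy
    rw [Submodule.mem_sup] at hy'
    obtain ⟨i, hi, z, hz, hiz⟩ := hy'
    rw [Ideal.mem_span_singleton'] at hz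
    obtain ⟨r, rfl⟩ := hz
    -- y * (1 - r * x) = i ∈ I
    have hmem : y * (1 - r * x) ∈ I := by
      have : y * (1 - r * x) = i := by linear_combination -hiz
      rw [this]; exact hi
    rcases (Ideal.isPrimary_iff.mp hIprimary).2 hmem with h | h
    · exact hxy (I.mul_mem_left x h)
    · rw [hIrad] at h
      have : (1 : R) ∈ M := by
        have := M.add_mem h (M.mul_mem_left r hx)
        simpa using this
      exact hM.ne_top ((Ideal.eq_top_iff_one M).mpr this)
  exact ⟨I, ⟨M, hM, hIprimary, hIrad, hsq, hIltM, hsup⟩, hJI, hIltM⟩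
end

section
/- Let R be a nontrivial commutative ring and let K be the intersection of all quasi-maximal ideals of R. Then J(R)² ⊆ ⋂{M² | M a maximal ideal of R} ⊆ K ⊆ J(R), where J(R) denotes the Jacobson radical of R. -/
lemma quasi_aux {R : Type*} [CommRing R] {I : Ideal R} (hI : I.QuasiMaximal) :
    ∃ M N : Ideal R, M.IsMaximal ∧ N.IsMaximal ∧ M ^ 2 ⊓ N ^ 2 ≤ I := by
  obtain ⟨hne, hq⟩ := hI
  by_cases hC : ∀ a ∉ I, I ⊔ Ideal.span {a} = ⊤
  · have hmax : I.IsMaximal := by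
      constructor
      constructor
      · exact hne
      · intro J hJ
        obtain ⟨a, haJ, haI⟩ := SetLike.exists_of_lt hJ
        have h1 := hC a haI
        have hle : I ⊔ Ideal.span {a} ≤ J :=
          sup_le hJ.le (Ideal.span_le.mpr (by simpa using haJ))
        rw [h1] at hle
        exact top_le_iff.mp hle
    exact ⟨I, I, hmax, hmax, by
      simpa [inf_idem] using Ideal.pow_le_self (I := I) two_ne_zero⟩
  · push_neg at hC
    obtain ⟨x, hxI, hxne⟩ := hC
    have hMmax : (I ⊔ Ideal.span {x}).IsMaximal := (hq x hxI).resolve_left hxne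
    set M := I ⊔ Ideal.span {x} with hMdef
    by_cases hx2 : x * x ∈ I
    · refine ⟨M, M, hMmax, hMmax, ?_⟩
      have hM2 : M ^ 2 ≤ I := by
        rw [pow_two]
        apply Ideal.mul_le.mpr
        intro a ha b hb
        rw [hMdef, Submodule.mem_sup] at ha hb
        obtain ⟨i, hi, z, hz, rfl⟩ := ha
        obtain ⟨j, hj, w, hw, rfl⟩ := hb
        rw [Ideal.mem_span_singleton'] at hz hw
        obtain ⟨r, rfl⟩ := hz
        obtain ⟨s, rfl⟩ := hw
        have hab : (i + r * x) * (j + s * x) =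
            i * (j + s * x) + (r * j) * x + (r * s) * (x * x) := by ring
        rw [hab]
        exact add_mem (add_mem (I.mul_mem_right _ hi)
          (I.mul_mem_right _ (I.mul_mem_left _ hj))) (I.mul_mem_left _ hx2)
      simpa [inf_idem] using hM2
    · have hle2 : I ⊔ Ideal.span {x * x} ≤ M :=
        sup_le le_sup_left (le_trans (Ideal.span_le.mpr (by
          simp only [Set.singleton_subset_iff, SetLike.mem_coe]
          exact Ideal.mul_mem_left _ x (Ideal.mem_span_singleton_self x))) le_sup_right)
      have h2 : (I ⊔ Ideal.span {x * x}).IsMaximal := by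
        rcases hq (x * x) hx2 with h | h
        · exact absurd (top_le_iff.mp (h ▸ hle2)) hMmax.ne_top
        · exact h
      have heq : I ⊔ Ideal.span {x * x} = M := h2.eq_of_le hMmax.ne_top hle2
      have hxM : x ∈ I ⊔ Ideal.span {x * x} := by
        rw [heq, hMdef]
        exact Ideal.mem_sup_right (Ideal.mem_span_singleton_self x)
      rw [Submodule.mem_sup] at hxM
      obtain ⟨i, hi, z, hz, hsum⟩ := hxM
      rw [Ideal.mem_span_singleton'] at hz
      obtain ⟨r, rfl⟩ := hz
      set e := r * x with hedef
      have key1 : e * e - e ∈ I := by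
        have h3 : e * e - e = -(r * i) := by
          rw [hedef]; linear_combination r * hsum
        rw [h3]
        exact neg_mem (I.mul_mem_left r hi)
      have key2 : x - e * x ∈ I := by
        have h3 : x - e * x = i := by rw [hedef]; linear_combination (-1 : R) * hsum
        rw [h3]; exact hi
      have heM : e ∈ M := by
        rw [hMdef]
        exact Ideal.mem_sup_right (Ideal.mem_span_singleton'.mpr ⟨r, rfl⟩)
      have h1e : (1 : R) - e ∉ I := by
        intro h
        apply hMmax.ne_top
        rw [Ideal.eq_top_iff_one]
        have : (1 : R) = (1 - e) + e := by ring
        rw [this]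
        exact add_mem (Ideal.mem_sup_left h) heM
      rcases hq (1 - e) h1e with htop | hNmax
      · exfalso
        have h1mem : (1 : R) ∈ I ⊔ Ideal.span {1 - e} := htop ▸ Submodule.mem_top
        rw [Submodule.mem_sup] at h1mem
        obtain ⟨j, hj, w, hw, hsum1⟩ := h1mem
        rw [Ideal.mem_span_singleton'] at hw
        obtain ⟨s, rfl⟩ := hw
        have heI : e ∈ I := by
          have h3 : e = e * j + s * (e - e * e) := by linear_combination (-e) * hsum1
          rw [h3]
          refine add_mem (I.mul_mem_left _ hj) (I.mul_mem_left s ?_)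
          simpa using neg_mem key1
        apply hxI
        have h4 : x = (x - e * x) + x * e := by ring
        rw [h4]
        exact add_mem key2 (I.mul_mem_left x heI)
      · refine ⟨M, I ⊔ Ideal.span {1 - e}, hMmax, hNmax, ?_⟩
        have hMN : M ⊓ (I ⊔ Ideal.span {1 - e}) ≤ I := by
          intro a ha
          obtain ⟨haM, haN⟩ := Submodule.mem_inf.mp ha
          rw [hMdef] at haM
          rw [Submodule.mem_sup] at haM haN
          obtain ⟨i₁, hi₁, z, hz, hsumM⟩ := haM
          obtain ⟨i₂, hi₂, w, hw, hsumN⟩ := haN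
          rw [Ideal.mem_span_singleton'] at hz hw
          obtain ⟨s₁, rfl⟩ := hz
          obtain ⟨t, rfl⟩ := hw
          have hea : e * a ∈ I := by
            have h3 : e * a = e * i₂ + t * (e - e * e) := by linear_combination (-e) * hsumN
            rw [h3]
            refine add_mem (I.mul_mem_left _ hi₂) (I.mul_mem_left t ?_)
            simpa using neg_mem key1
          have haea : a - e * a ∈ I := by
            have h3 : a - e * a = (1 - e) * i₁ + s₁ * (x - e * x) := by
              linear_combination (e - 1) * hsumM
            rw [h3]
            exact add_mem (I.mul_mem_left _ hi₁) (I.mul_mem_left _ key2)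
          have h4 : a = (a - e * a) + e * a := by ring
          rw [h4]
          exact add_mem haea hea
        exact le_trans (inf_le_inf (Ideal.pow_le_self two_ne_zero)
          (Ideal.pow_le_self two_ne_zero)) hMN

/-- `J(R)² ⊆ ⋂ {M² | M maximal} ⊆ ⋂ {I | I quasi-maximal} ⊆ J(R)`. -/
theorem jacobson_sq_le_inf_quasiMaximal {R : Type*} [CommRing R] [Nontrivial R] :
    (⊥ : Ideal R).jacobson ^ 2 ≤ sInf {J : Ideal R | ∃ M : Ideal R, M.IsMaximal ∧ J = M ^ 2} ∧
    sInf {J : Ideal R | ∃ M : Ideal R, M.IsMaximal ∧ J = M ^ 2} ≤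
      sInf {I : Ideal R | I.QuasiMaximal} ∧
    sInf {I : Ideal R | I.QuasiMaximal} ≤ (⊥ : Ideal R).jacobson := by
  refine ⟨?_, ?_, ?_⟩
  · rw [Ideal.jacobson]
    apply le_sInf
    rintro J ⟨M, hM, rfl⟩
    exact Ideal.pow_right_mono (sInf_le (show M ∈ {J : Ideal R | ⊥ ≤ J ∧ J.IsMaximal} from ⟨bot_le, hM⟩)) 2
  · apply le_sInf
    rintro I hI
    obtain ⟨M, N, hM, hN, hle⟩ := quasi_aux hI
    exact le_trans (le_inf (sInf_le ⟨M, hM, rfl⟩) (sInf_le ⟨N, hN, rfl⟩)) hle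
  · rw [Ideal.jacobson]
    apply le_sInf
    rintro J ⟨-, hJ⟩
    apply sInf_le
    refine ⟨hJ.ne_top, fun a ha => Or.inl ?_⟩
    refine hJ.out.2 _ (lt_of_le_of_ne le_sup_left fun h => ha ?_)
    rw [h]
    exact Ideal.mem_sup_right (Ideal.mem_span_singleton_self a)
end

section
/- Let R be a commutative ring and M a maximal ideal of R. There exists a ramified ideal I of R with I ⊊ M (and with M as the associated maximal ideal) if and only if M² ≠ M. -/
/-- For a maximal ideal `M`, there exists an ideal ramified at `M` (hence `⊊ M`)
iff `M² ≠ M`. -/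
theorem exists_ramifiedAt_iff_sq_ne {R : Type*} [CommRing R]
    (M : Ideal R) (hM : M.IsMaximal) :
    (∃ I : Ideal R, I.RamifiedAt M) ↔ M ^ 2 ≠ M := by
  constructor
  · rintro ⟨I, -, -, hsq, hlt, -⟩ heq
    exact absurd (heq ▸ hsq : M ≤ I) (not_le_of_gt hlt)
  · intro hne
    have hle : M ^ 2 ≤ M := by
      rw [pow_two]; exact Ideal.mul_le_left
    obtain ⟨a, haM, ha2⟩ := SetLike.exists_of_lt (lt_of_le_of_ne hle hne)
    -- Zorn's lemma: a maximal ideal `I` with `M² ≤ I ≤ M` and `a ∉ I`.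
    obtain ⟨I, -, hIs, hImax⟩ :=
      zorn_le_nonempty₀ {J : Ideal R | M ^ 2 ≤ J ∧ J ≤ M ∧ a ∉ J}
        (fun c hcs hchain y hy => by
          refine ⟨sSup c, ⟨le_trans (hcs hy).1 (le_sSup hy), sSup_le fun z hz => (hcs hz).2.1,
            fun ha => ?_⟩, fun z hz => le_sSup hz⟩
          obtain ⟨p, hp, hap⟩ :=
            (Submodule.mem_sSup_of_directed ⟨y, hy⟩ hchain.directedOn).1 ha
          exact (hcs hp).2.2 hap)
        (M ^ 2) ⟨le_rfl, hle, ha2⟩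
    obtain ⟨hsq, hIM, haI⟩ := hIs
    -- key maximality consequence: for `b ∈ M \ I`, `a ∈ I ⊔ span {b}`.
    have key : ∀ b ∈ M, b ∉ I → a ∈ I ⊔ Ideal.span {b} := by
      intro b hbM hbI
      by_contra haJ
      have hJs : I ⊔ Ideal.span {b} ∈ {J : Ideal R | M ^ 2 ≤ J ∧ J ≤ M ∧ a ∉ J} :=
        ⟨le_trans hsq le_sup_left,
          sup_le hIM ((Ideal.span_singleton_le_iff_mem M).2 hbM), haJ⟩
      exact hbI (hImax hJs le_sup_left (Ideal.mem_sup_right (Ideal.subset_span rfl)))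
    -- `M = I ⊔ span {a}`.
    have hMa : M = I ⊔ Ideal.span {a} := by
      refine le_antisymm (fun m hmM => ?_)
        (sup_le hIM ((Ideal.span_singleton_le_iff_mem M).2 haM))
      by_cases hmI : m ∈ I
      · exact Ideal.mem_sup_left hmI
      · obtain ⟨i, hi, s, hs, his⟩ := Submodule.mem_sup.1 (key m hmM hmI)
        obtain ⟨r, hr⟩ := Ideal.mem_span_singleton'.1 hs
        have hrm : r * m = a - i := by
          rw [hr, eq_sub_iff_add_eq, add_comm]; exact his
        have hrM : r ∉ M := by
          intro hrM
          apply haI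
          have h1 : r * m ∈ I := hsq (by rw [pow_two]; exact Ideal.mul_mem_mul hrM hmM)
          have : a = r * m + i := by rw [hrm]; ring
          rw [this]
          exact I.add_mem h1 hi
        obtain ⟨z, j, hj, hzj⟩ := hM.exists_inv hrM
        have hm : m = z * (r * m) + m * j := by
          have h2 : m * (z * r + j) = m * 1 := by rw [hzj]
          rw [mul_one] at h2
          calc m = m * (z * r + j) := h2.symm
            _ = z * (r * m) + m * j := by ring
        rw [hm]
        refine Submodule.add_mem _ ?_ ?_
        · rw [hrm, mul_sub]
          refine Submodule.sub_mem _ ?_ (Ideal.mem_sup_left (I.mul_mem_left _ hi))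
          exact Ideal.mem_sup_right (Ideal.mul_mem_left _ _ (Ideal.subset_span rfl))
        · exact Ideal.mem_sup_left (hsq (by rw [pow_two]; exact Ideal.mul_mem_mul hmM hj))
    -- radical of `I` is `M`.
    have hrad : I.radical = M := by
      refine le_antisymm ?_ ?_
      · rw [← hM.isPrime.radical]
        exact Ideal.radical_mono hIM
      · have h3 := Ideal.radical_mono hsq
        rwa [Ideal.radical_pow M two_ne_zero, hM.isPrime.radical] at h3
    refine ⟨I, ?_, hrad, hsq, lt_of_le_of_ne hIM fun h => haI (h ▸ haM), ?_⟩
    · -- primary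
      refine Ideal.isPrimary_iff.mpr ⟨fun h => hM.ne_top (top_unique (h ▸ hIM)), ?_⟩
      intro x y hxy
      by_cases hyM : y ∈ M
      · exact Or.inr (hrad ▸ hyM)
      · left
        obtain ⟨z, j, hj, hzj⟩ := hM.exists_inv hyM
        have hx : x = (x * y) * (z ^ 2 * y) + (x * y) * (2 * z * j) + x * (j * j) := by
          calc x = x * (z * y + j) ^ 2 := by rw [hzj]; ring
            _ = _ := by ring
        rw [hx]
        refine Submodule.add_mem _ (Submodule.add_mem _ ?_ ?_) ?_
        · exact I.mul_mem_right _ hxy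
        · exact I.mul_mem_right _ hxy
        · exact I.mul_mem_left _ (hsq (by rw [pow_two]; exact Ideal.mul_mem_mul hj hj))
    · -- `M = I ⊔ span {b}` for every `b ∈ M \ I`.
      intro b hbM hbI
      refine le_antisymm ?_ (sup_le hIM ((Ideal.span_singleton_le_iff_mem M).2 hbM))
      rw [hMa]
      refine sup_le le_sup_left ?_
      rw [Ideal.span_singleton_le_iff_mem]
      exact key b hbM hbI
end

section
/- Let R be a commutative ring that is not a field and such that the zero ideal of R is quasi-maximal. Then R is a Max-ring: every nonzero R-module has a maximal proper submodule. -/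
/-- If `I` is a maximal ideal of `R` and `I • ⊤ ≠ ⊤` in an `R`-module `M`,
then `M` has a maximal proper submodule. -/
lemma exists_coatom_of_smul_ne_top {R : Type*} [CommRing R] {M : Type*} [AddCommGroup M]
    [Module R M] (I : Ideal R) (hI : I.IsMaximal)
    (h : I • (⊤ : Submodule R M) ≠ ⊤) : ∃ N : Submodule R M, IsCoatom N := by
  obtain ⟨x, hx⟩ : ∃ x : M, x ∉ I • (⊤ : Submodule R M) := by
    by_contra hc
    push_neg at hc
    exact h (Submodule.eq_top_iff'.mpr hc)
  set S : Set (Submodule R M) := {N | I • (⊤ : Submodule R M) ≤ N ∧ x ∉ N} with hS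
  obtain ⟨N, -, hNS, hNmax⟩ := zorn_le_nonempty₀ S (fun c hcS hchain y hy => by
      refine ⟨sSup c, ⟨?_, ?_⟩, fun z hz => le_sSup hz⟩
      · exact le_trans (hcS hy).1 (le_sSup hy)
      · intro hxs
        rw [Submodule.mem_sSup_of_directed ⟨y, hy⟩ hchain.directedOn] at hxs
        obtain ⟨z, hzc, hxz⟩ := hxs
        exact (hcS hzc).2 hxz)
    (I • ⊤) ⟨le_rfl, hx⟩
  obtain ⟨hIN, hxN⟩ := hNS
  have key : ∀ m : M, m ∉ N → x ∈ N ⊔ Submodule.span R {m} := by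
    intro m hm
    by_contra hxm
    have : N ⊔ Submodule.span R {m} ∈ S :=
      ⟨le_trans hIN le_sup_left, hxm⟩
    have := hNmax this le_sup_left
    exact hm (this (Submodule.mem_sup_right (Submodule.mem_span_singleton_self m)))
  refine ⟨N, fun hN => hxN (hN ▸ Submodule.mem_top), fun P hNP => ?_⟩
  obtain ⟨m, hmP, hmN⟩ := SetLike.exists_of_lt hNP
  have hxP : x ∈ P := by
    have := key m hmN
    rw [Submodule.mem_sup] at this
    obtain ⟨n, hn, w, hw, hnw⟩ := this
    rw [Submodule.mem_span_singleton] at hw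
    obtain ⟨r, rfl⟩ := hw
    exact hnw ▸ P.add_mem (hNP.le hn) (P.smul_mem r hmP)
  rw [eq_top_iff]
  intro z _
  by_cases hzN : z ∈ N
  · exact hNP.le hzN
  · have := key z hzN
    rw [Submodule.mem_sup] at this
    obtain ⟨n, hn, w, hw, hnw⟩ := this
    rw [Submodule.mem_span_singleton] at hw
    obtain ⟨r, rfl⟩ := hw
    have hrI : r ∉ I := by
      intro hrI
      exact hxN (hnw ▸ N.add_mem hn (hIN (Submodule.smul_mem_smul hrI Submodule.mem_top)))
    obtain ⟨s, i, hi, hsi⟩ := hI.exists_inv hrI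
    have hz : z = s • ((r • z) : M) + i • z := by
      rw [smul_smul, ← add_smul, hsi, one_smul]
    rw [hz]
    have hrz : (r • z : M) ∈ P := by
      have : r • z = x - n := by rw [← hnw]; abel
      rw [this]
      exact P.sub_mem hxP (hNP.le hn)
    exact P.add_mem (P.smul_mem s hrz) (hNP.le (hIN (Submodule.smul_mem_smul hi Submodule.mem_top)))

/-- Structure lemma: if `R` is not a field and `⊥` is quasi-maximal, then there are
`a b` generating maximal ideals with `a * b = 0`. -/
lemma exists_maximal_span_mul_eq_zero {R : Type*} [CommRing R]
    (hF : ¬ IsField R) (h0 : (⊥ : Ideal R).QuasiMaximal) :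
    ∃ a b : R, (Ideal.span {a}).IsMaximal ∧ (Ideal.span {b}).IsMaximal ∧ a * b = 0 := by
  have hnt : Nontrivial R := by
    by_contra h
    rw [not_nontrivial_iff_subsingleton] at h
    exact h0.1 (Subsingleton.elim _ _)
  have hq : ∀ a : R, a ≠ 0 → Ideal.span {a} = ⊤ ∨ (Ideal.span {a}).IsMaximal := by
    intro a ha
    have := h0.2 a (by simpa using ha)
    simpa using this
  obtain ⟨I, hbot, htop⟩ := Ring.not_isField_iff_exists_ideal_bot_lt_and_lt_top.mp hF
  obtain ⟨a, haI, ha0⟩ := SetLike.exists_of_lt hbot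
  rw [Submodule.mem_bot] at ha0
  have haspan : Ideal.span {a} ≤ I := (Ideal.span_singleton_le_iff_mem I).mpr haI
  have hamax : (Ideal.span {a}).IsMaximal := by
    rcases hq a ha0 with h | h
    · exact absurd (top_le_iff.mp (h ▸ haspan)) htop.ne
    · exact h
  by_cases hloc : ∀ x : R, x ∉ Ideal.span {a} → IsUnit x
  · refine ⟨a, a, hamax, hamax, ?_⟩
    by_contra haa
    have hle : Ideal.span {a * a} ≤ Ideal.span {a} :=
      Ideal.span_singleton_le_span_singleton.mpr ⟨a, rfl⟩
    have heq : Ideal.span {a * a} = Ideal.span {a} := by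
      rcases hq (a * a) haa with h | h
      · exact absurd (top_le_iff.mp (h ▸ hle)) hamax.ne_top
      · exact h.eq_of_le hamax.ne_top hle
    have ha' : a ∈ Ideal.span {(a * a : R)} := heq ▸ Ideal.mem_span_singleton_self a
    rw [Ideal.mem_span_singleton'] at ha'
    obtain ⟨c, hc⟩ := ha'
    have hzero : a * (1 - c * a) = 0 := by ring_nf; linear_combination -hc
    have hunit : IsUnit (1 - c * a) := by
      apply hloc
      intro hmem
      have : (1 : R) ∈ Ideal.span {a} := by
        have : c * a ∈ Ideal.span {a} := Ideal.mul_mem_left _ c (Ideal.mem_span_singleton_self a)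
        simpa using add_mem hmem this
      exact hamax.ne_top ((Ideal.eq_top_iff_one _).mpr this)
    exact ha0 (by
      obtain ⟨u, hu⟩ := hunit
      calc a = a * (1 - c * a) * ↑u⁻¹ := by rw [← hu, mul_assoc, Units.mul_inv, mul_one]
        _ = 0 := by rw [hzero, zero_mul])
  · push_neg at hloc
    obtain ⟨b, hbspan, hbunit⟩ := hloc
    have hb0 : b ≠ 0 := fun h => hbspan (h ▸ (Ideal.span {a}).zero_mem)
    have hbmax : (Ideal.span {b}).IsMaximal := by
      rcases hq b hb0 with h | h
      · exact absurd (Ideal.span_singleton_eq_top.mp h) hbunit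
      · exact h
    have hne : Ideal.span {a} ≠ Ideal.span {b} := fun h =>
      hbspan (h ▸ Ideal.mem_span_singleton_self b)
    refine ⟨a, b, hamax, hbmax, ?_⟩
    by_contra hab
    have hlea : Ideal.span {a * b} ≤ Ideal.span {a} :=
      Ideal.span_singleton_le_span_singleton.mpr ⟨b, rfl⟩
    have hleb : Ideal.span {a * b} ≤ Ideal.span {b} :=
      Ideal.span_singleton_le_span_singleton.mpr ⟨a, mul_comm a b⟩
    rcases hq (a * b) hab with h | h
    · exact absurd (top_le_iff.mp (h ▸ hlea)) hamax.ne_top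
    · exact hne ((h.eq_of_le hamax.ne_top hlea).symm.trans (h.eq_of_le hbmax.ne_top hleb))

/-- If `R` is not a field and the zero ideal of `R` is quasi-maximal, then `R` is a
Max-ring: every nonzero `R`-module has a maximal proper submodule. -/
theorem maxRing_of_bot_quasiMaximal {R : Type*} [CommRing R]
    (hF : ¬ IsField R) (h0 : (⊥ : Ideal R).QuasiMaximal) :
    ∀ (M : Type*) [AddCommGroup M] [Module R M], Nontrivial M →
      ∃ N : Submodule R M, IsCoatom N := by
  obtain ⟨a, b, hamax, hbmax, hab⟩ := exists_maximal_span_mul_eq_zero hF h0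
  intro M _ _ hMnt
  by_cases hA : Ideal.span {a} • (⊤ : Submodule R M) = ⊤
  · apply exists_coatom_of_smul_ne_top (Ideal.span {b}) hbmax
    have : Ideal.span {b} • (⊤ : Submodule R M)
        = Ideal.span {b} • (Ideal.span {a} • (⊤ : Submodule R M)) := by rw [hA]
    rw [this, ← Submodule.smul_assoc, smul_eq_mul, Ideal.span_singleton_mul_span_singleton,
      mul_comm b a, hab]
    have : Ideal.span ({(0 : R)} : Set R) = ⊥ := by simp
    rw [this, Submodule.bot_smul]
    exact fun h => (bot_ne_top (α := Submodule R M)) h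
  · exact exists_coatom_of_smul_ne_top (Ideal.span {a}) hamax hA
end

section
/- Let R ⊆ S be an extension of commutative rings and let M be a maximal ideal of R not belonging to the support of the R-module S/R (equivalently, the localization of S/R at M is zero). Then MS is the unique prime ideal of S lying over M, and MS is a maximal ideal of S. -/
/-- If `M` is a maximal ideal of `R` not in the support of the `R`-module `S/R`
(i.e. the localization of `S/R` at `M` vanishes), then `MS` is the unique prime of `S`
lying over `M`, and `MS` is maximal. -/
theorem map_isMaximal_of_not_mem_support {R S : Type*} [CommRing R] [CommRing S] [Algebra R S]
    (hinj : Function.Injective (algebraMap R S)) (M : Ideal R) [M.IsMaximal]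
    (hsupp : Subsingleton
      (LocalizedModule M.primeCompl (S ⧸ LinearMap.range (Algebra.linearMap R S)))) :
    (M.map (algebraMap R S)).comap (algebraMap R S) = M ∧
    (∀ Q : Ideal S, Q.IsPrime → Q.comap (algebraMap R S) = M → Q = M.map (algebraMap R S)) ∧
    (M.map (algebraMap R S)).IsMaximal := by
  -- Step 1: every `s : S` is, up to a denominator outside `M`, in the image of `R`.
  have hk : ∀ s : S, ∃ t : R, t ∉ M ∧ ∃ a : R, t • s = algebraMap R S a := by
    intro s
    have h0 : (LocalizedModule.mk
        (Submodule.Quotient.mk s : S ⧸ LinearMap.range (Algebra.linearMap R S)) 1 :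
        LocalizedModule M.primeCompl _) =
        LocalizedModule.mk 0 1 := Subsingleton.elim _ _
    rw [LocalizedModule.mk_eq] at h0
    obtain ⟨u, hu⟩ := h0
    simp only [one_smul, smul_zero] at hu
    have h1 : ((u : R) • (Submodule.Quotient.mk s) :
        S ⧸ LinearMap.range (Algebra.linearMap R S)) = 0 := hu
    rw [← Submodule.Quotient.mk_smul, Submodule.Quotient.mk_eq_zero] at h1
    obtain ⟨a, ha⟩ := h1
    exact ⟨u, u.2, a, ha.symm⟩
  have hm : M.IsMaximal := inferInstance
  have h1M : (1 : R) ∉ M := fun h => hm.ne_top ((Ideal.eq_top_iff_one M).2 h)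
  -- Step 2: for `x ∈ MS` there are `t ∉ M` and `a ∈ M` with `t • x = a`.
  have hP : ∀ x ∈ M.map (algebraMap R S), ∃ t : R, t ∉ M ∧ ∃ a ∈ M,
      t • x = algebraMap R S a := by
    intro x hx
    have hx' : x ∈ Submodule.span S ((algebraMap R S) '' (M : Set R)) := hx
    clear hx
    induction hx' using Submodule.span_induction with
    | mem y hy =>
      obtain ⟨m, hm, rfl⟩ := hy
      exact ⟨1, h1M, m, hm, by simp⟩
    | zero => exact ⟨1, h1M, 0, M.zero_mem, by simp⟩
    | add y z _ _ hy hz =>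
      obtain ⟨t, ht, a, haM, ha⟩ := hy
      obtain ⟨t', ht', a', haM', ha'⟩ := hz
      refine ⟨t * t', fun h => ?_, t' * a + t * a',
        M.add_mem (M.mul_mem_left _ haM) (M.mul_mem_left _ haM'), ?_⟩
      · rcases hm.isPrime.mem_or_mem h with h | h
        exacts [ht h, ht' h]
      · have h2 : (t * t') • (y + z) = t' • (t • y) + t • (t' • z) := by
          rw [smul_add, ← mul_smul, ← mul_smul, mul_comm t' t]
        rw [h2, ha, ha', Algebra.smul_def, Algebra.smul_def, map_add, map_mul, map_mul]
    | smul s y _ hy =>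
      obtain ⟨t, ht, a, haM, ha⟩ := hy
      obtain ⟨u, hu, b, hb⟩ := hk s
      refine ⟨u * t, fun h => ?_, b * a, M.mul_mem_left _ haM, ?_⟩
      · rcases hm.isPrime.mem_or_mem h with h | h
        exacts [hu h, ht h]
      · calc (u * t) • (s • y) = (u • s) * (t • y) := by
              simp only [smul_eq_mul, Algebra.smul_def, map_mul]; ring
          _ = algebraMap R S (b * a) := by rw [hb, ha, map_mul]
  -- Step 3: `comap (MS) = M`.
  have hcomap : (M.map (algebraMap R S)).comap (algebraMap R S) = M := by
    refine le_antisymm ?_ (Ideal.le_comap_map)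
    intro r hr
    obtain ⟨t, ht, a, haM, ha⟩ := hP _ hr
    rw [Algebra.smul_def, ← map_mul] at ha
    have : t * r ∈ M := hinj ha ▸ haM
    rcases hm.isPrime.mem_or_mem this with h | h
    exacts [absurd h ht, h]
  -- `MS ≠ ⊤`
  have hne : M.map (algebraMap R S) ≠ ⊤ := by
    intro h
    apply hm.ne_top
    rw [← hcomap, h, Ideal.comap_top]
  -- Step 4: maximality, via the first isomorphism theorem.
  have hmax : (M.map (algebraMap R S)).IsMaximal := by
    set f : R →+* S ⧸ M.map (algebraMap R S) :=
      (Ideal.Quotient.mk (M.map (algebraMap R S))).comp (algebraMap R S) with hf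
    have hker : RingHom.ker f = M := by
      rw [hf, ← RingHom.comap_ker, Ideal.mk_ker, hcomap]
    have hsur : Function.Surjective f := by
      intro y
      obtain ⟨s, rfl⟩ := Ideal.Quotient.mk_surjective y
      obtain ⟨t, ht, a, ha⟩ := hk s
      obtain ⟨u, i, hiM, hui⟩ := hm.exists_inv ht
      refine ⟨u * a, ?_⟩
      have hs : s - algebraMap R S (u * a) = algebraMap R S i * s := by
        have : s = algebraMap R S (u * t + i) * s := by
          rw [show u * t + i = 1 by linear_combination hui]; simp
        calc s - algebraMap R S (u * a)
            = algebraMap R S (u * t + i) * s - algebraMap R S (u * a) := by rw [← this]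
          _ = algebraMap R S u * (t • s) + algebraMap R S i * s
              - algebraMap R S u * algebraMap R S a := by
              rw [Algebra.smul_def]; push_cast [map_add, map_mul]; ring
          _ = algebraMap R S i * s := by rw [ha]; ring
      have : s - algebraMap R S (u * a) ∈ M.map (algebraMap R S) := by
        rw [hs]
        exact Ideal.mul_mem_right _ _ (Ideal.mem_map_of_mem _ hiM)
      have := (Ideal.Quotient.mk_eq_mk_iff_sub_mem _ _).2 this
      exact this.symm
    have e : (R ⧸ M) ≃+* (S ⧸ M.map (algebraMap R S)) :=
      (Ideal.quotEquivOfEq hker.symm).trans (RingHom.quotientKerEquivOfSurjective hsur)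
    refine (Ideal.Quotient.maximal_ideal_iff_isField_quotient _).2 ?_
    exact e.symm.toMulEquiv.isField
      ((Ideal.Quotient.maximal_ideal_iff_isField_quotient M).1 hm)
  -- Step 5: uniqueness of the prime over `M`.
  refine ⟨hcomap, fun Q hQ hQM => ?_, hmax⟩
  have hle : M.map (algebraMap R S) ≤ Q := Ideal.map_le_iff_le_comap.2 (le_of_eq hQM.symm)
  exact (hmax.eq_of_le hQ.ne_top hle).symm
end

section
/- Let R ⊊ S be a finite minimal ring extension, i.e. R is a proper subring of S, S is finitely generated as an R-module, and there is no subring T of S with R ⊊ T ⊊ S. Then the conductor (R : S) = {x ∈ S | xS ⊆ R} is a quasi-maximal ideal of S. -/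
/-- The conductor `(R : S) = {x ∈ S | xS ⊆ R}` of a ring extension `R ⊆ S`,
as an ideal of `S`. -/
def conductorIdeal (R S : Type*) [CommRing R] [CommRing S] [Algebra R S] : Ideal S where
  carrier := {x : S | ∀ s : S, x * s ∈ (algebraMap R S).range}
  add_mem' := by
    intro x y hx hy s
    simpa [add_mul] using add_mem (hx s) (hy s)
  zero_mem' := by
    intro s
    simpa using zero_mem (algebraMap R S).range
  smul_mem' := by
    intro c x hx s
    have h := hx (c * s)
    have e : x * (c * s) = c • x * s := by
      rw [smul_eq_mul]; ring
    rwa [e] at h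

/-- If `R ⊊ S` is a finite minimal ring extension, then the conductor `(R : S)` is a
quasi-maximal ideal of `S`. -/
theorem conductor_quasiMaximal_of_minimal {R S : Type*} [CommRing R] [CommRing S] [Algebra R S]
    (hinj : Function.Injective (algebraMap R S)) [Module.Finite R S]
    (hne : (⊥ : Subalgebra R S) ≠ ⊤)
    (hmin : ∀ T : Subalgebra R S, T = ⊥ ∨ T = ⊤) :
    (conductorIdeal R S).QuasiMaximal := by
  set C := conductorIdeal R S with hC
  have hmemC : ∀ x : S, x ∈ C ↔ ∀ s : S, x * s ∈ (algebraMap R S).range := fun x => Iff.rfl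
  -- Lemma A : for any ideal J of S, either J ⊆ R or S = R + J.
  have lemA : ∀ J : Ideal S, (∀ x ∈ J, x ∈ (algebraMap R S).range) ∨
      (∀ s : S, ∃ r : R, s - algebraMap R S r ∈ J) := by
    intro J
    rcases hmin ((⊥ : Subalgebra R (S ⧸ J)).comap (Ideal.Quotient.mkₐ R J)) with hT | hT
    · left
      intro x hx
      have hxT : x ∈ ((⊥ : Subalgebra R (S ⧸ J)).comap (Ideal.Quotient.mkₐ R J)) := by
        show Ideal.Quotient.mkₐ R J x ∈ (⊥ : Subalgebra R (S ⧸ J))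
        rw [Algebra.mem_bot]
        exact ⟨0, by simp [Ideal.Quotient.mkₐ_eq_mk, Ideal.Quotient.eq_zero_iff_mem.2 hx]⟩
      rw [hT, Algebra.mem_bot] at hxT
      obtain ⟨r, hr⟩ := hxT
      exact ⟨r, hr⟩
    · right
      intro s
      have hs : s ∈ ((⊥ : Subalgebra R (S ⧸ J)).comap (Ideal.Quotient.mkₐ R J)) := by
        rw [hT]; trivial
      rw [Subalgebra.mem_comap, Algebra.mem_bot] at hs
      obtain ⟨r, hr⟩ := hs
      refine ⟨r, ?_⟩
      have h2 : Ideal.Quotient.mk J (algebraMap R S r) = Ideal.Quotient.mk J s := hr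
      exact (Ideal.Quotient.eq).mp h2.symm
  -- An ideal of S contained in R is contained in C.
  have hsubC : ∀ J : Ideal S, (∀ x ∈ J, x ∈ (algebraMap R S).range) → J ≤ C := by
    intro J hJ x hx s
    exact hJ _ (J.mul_mem_right s hx)
  have hCne : C ≠ ⊤ := by
    intro h
    apply hne
    rw [eq_top_iff]
    intro x _
    rw [Algebra.mem_bot]
    have h1 : (1 : S) ∈ C := h ▸ trivial
    obtain ⟨r, hr⟩ := h1 x
    exact ⟨r, by simpa using hr⟩
  set C' := C.comap (algebraMap R S) with hC'
  -- Lemma B : any maximal ideal of R containing C' equals C'.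
  have lemB : ∀ M : Ideal R, M.IsMaximal → C' ≤ M → M ≤ C' := by
    intro M hM hCM r hrM
    by_contra hrC
    have hrC2 : algebraMap R S r ∉ C := hrC
    obtain ⟨s0, hs0⟩ : ∃ s0 : S, algebraMap R S r * s0 ∉ (algebraMap R S).range := by
      by_contra h
      push_neg at h
      exact hrC2 h
    rcases lemA (Ideal.span {algebraMap R S r}) with h | h
    · exact hs0 (h _ (Ideal.mem_span_singleton.mpr ⟨s0, rfl⟩))
    · -- Nakayama argument
      set A' : Submodule R S := LinearMap.range (Algebra.linearMap R S) with hA'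
      have hfg : (⊤ : Submodule R (S ⧸ A')).FG := Module.finite_def.mp inferInstance
      have hin : (⊤ : Submodule R (S ⧸ A')) ≤ (Ideal.span {r}) • ⊤ := by
        intro q _
        obtain ⟨s, rfl⟩ := Submodule.Quotient.mk_surjective A' q
        obtain ⟨r', hr'⟩ := h s
        obtain ⟨t, ht⟩ := Ideal.mem_span_singleton.mp hr'
        have hst : s = algebraMap R S r' + r • t := by
          rw [Algebra.smul_def]
          linear_combination ht
        rw [hst]
        have : (Submodule.Quotient.mk (algebraMap R S r' + r • t) : S ⧸ A')
            = r • Submodule.Quotient.mk t := by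
          rw [← Submodule.Quotient.mk_smul, Submodule.Quotient.eq]
          simp [hA']
        rw [this]
        exact Submodule.smul_mem_smul (Ideal.mem_span_singleton_self r) trivial
      obtain ⟨u, hu1, hu2⟩ :=
        Submodule.exists_sub_one_mem_and_smul_eq_zero_of_fg_of_le_smul
          (Ideal.span {r}) ⊤ hfg hin
      have huC' : u ∈ C' := by
        show algebraMap R S u ∈ C
        intro s
        have h0 : u • (Submodule.Quotient.mk s : S ⧸ A') = 0 := hu2 _ trivial
        rw [← Submodule.Quotient.mk_smul, Submodule.Quotient.mk_eq_zero] at h0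
        obtain ⟨r'', hr''⟩ := h0
        exact ⟨r'', by simpa [Algebra.smul_def] using hr''⟩
      have h1M : (1 : R) ∈ M := by
        have : u - 1 ∈ M := (Ideal.span_singleton_le_iff_mem M).mpr hrM hu1
        have : u - (u - 1) ∈ M := M.sub_mem (hCM huC') this
        simpa using this
      exact hM.ne_top (Ideal.eq_top_iff_one M |>.mpr h1M)
  have hC'ne : C' ≠ ⊤ := by
    intro h
    apply hCne
    rw [Ideal.eq_top_iff_one]
    have : (1 : R) ∈ C' := h ▸ trivial
    simpa using (show algebraMap R S 1 ∈ C from this)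
  obtain ⟨M, hMmax, hCM⟩ := Ideal.exists_le_maximal C' hC'ne
  have hC'eq : C' = M := le_antisymm hCM (lemB M hMmax hCM)
  have hC'max : C'.IsMaximal := hC'eq ▸ hMmax
  -- Main argument
  refine ⟨hCne, ?_⟩
  intro a ha
  set J := C ⊔ Ideal.span {a} with hJ
  rcases lemA J with h | h
  · exfalso
    have : J ≤ C := hsubC J h
    exact ha (this (le_sup_right (a := C) (Ideal.mem_span_singleton_self a)))
  · by_cases hJtop : J = ⊤
    · exact Or.inl hJtop
    · right
      rw [Ideal.isMaximal_iff]
      constructor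
      · intro h1
        exact hJtop ((Ideal.eq_top_iff_one J).mpr h1)
      · intro K x hJK hxJ hxK
        obtain ⟨r, hr⟩ := h x
        have hrC' : r ∉ C' := by
          intro hrc
          apply hxJ
          have hrJ : algebraMap R S r ∈ J := le_sup_left (a := C) hrc
          have := J.add_mem hr hrJ
          simpa using this
        obtain ⟨t, c, hc, htc⟩ := hC'max.exists_inv hrC'
        have hcK : algebraMap R S c ∈ K := hJK (le_sup_left (a := C) hc)
        have hrK : algebraMap R S r ∈ K := by
          have := K.sub_mem hxK (hJK hr)
          simpa using this
        have : algebraMap R S t * algebraMap R S r + algebraMap R S c = 1 := by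
          rw [← map_mul, ← map_add, htc, map_one]
        rw [← this]
        exact K.add_mem (K.mul_mem_left _ hrK) hcK
end

section
/- Let I be a proper ideal of a commutative ring R. Then I is quasi-maximal if and only if the following three conditions hold: (i) I is 2-absorbing; (ii) every prime ideal of R containing I is maximal; (iii) for every maximal ideal M of R containing I, the ideal M/I of R/I is principal (equivalently, there exists t ∈ R with M = I + Rt). -/
/-- A proper ideal `I` is 2-absorbing if whenever `a * b * c ∈ I`, one of `a * b`,
`b * c`, `a * c` lies in `I`. -/
def Ideal.TwoAbsorbing {R : Type*} [CommRing R] (I : Ideal R) : Prop :=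
  I ≠ ⊤ ∧ ∀ a b c : R, a * b * c ∈ I → a * b ∈ I ∨ b * c ∈ I ∨ a * c ∈ I

section Aux

variable {R : Type*} [CommRing R] (I : Ideal R)

/-- If `I` is 2-absorbing and `x^(n+2) ∈ I` then `x^2 ∈ I`. -/
lemma aux_sq_mem (h2 : ∀ a b c : R, a * b * c ∈ I → a * b ∈ I ∨ b * c ∈ I ∨ a * c ∈ I) :
    ∀ (n : ℕ) (x : R), x ^ (n + 2) ∈ I → x ^ 2 ∈ I := by
  intro n
  induction n with
  | zero => intro x hx; simpa using hx
  | succ n ih =>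
    intro x hx
    have h : x * x * x ^ (n + 1) ∈ I := by
      have e : x * x * x ^ (n + 1) = x ^ (n + 3) := by ring
      rwa [e]
    rcases h2 x x (x ^ (n + 1)) h with h | h | h
    · rwa [← sq] at h
    · exact ih x (by rwa [show x * x ^ (n + 1) = x ^ (n + 2) by ring] at h)
    · exact ih x (by rwa [show x * x ^ (n + 1) = x ^ (n + 2) by ring] at h)

/-- If `I` is 2-absorbing and `u * x^(n+1) ∈ I` then `u * x ∈ I` or `x^2 ∈ I`. -/
lemma aux_mul_pow (h2 : ∀ a b c : R, a * b * c ∈ I → a * b ∈ I ∨ b * c ∈ I ∨ a * c ∈ I) :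
    ∀ (n : ℕ) (u x : R), u * x ^ (n + 1) ∈ I → u * x ∈ I ∨ x ^ 2 ∈ I := by
  intro n
  induction n with
  | zero => intro u x h; left; simpa using h
  | succ n ih =>
    intro u x h
    have h' : u * x ^ (n + 1) * x ∈ I := by
      have e : u * x ^ (n + 1) * x = u * x ^ (n + 2) := by ring
      rwa [e]
    rcases h2 u (x ^ (n + 1)) x h' with h'' | h'' | h''
    · exact ih u x h''
    · exact Or.inr (aux_sq_mem I h2 n x
        (by rwa [show x ^ (n + 1) * x = x ^ (n + 2) by ring] at h''))
    · exact Or.inl h''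

/-- If every prime over `I` is maximal, `M` is maximal over `I` and `x ∈ M`, then
there are `u ∉ M` and `n` with `u * x^(n+1) ∈ I`. -/
lemma aux_lemmaL (hdim : ∀ P : Ideal R, P.IsPrime → I ≤ P → P.IsMaximal)
    (M : Ideal R) (hM : M.IsMaximal) (hIM : I ≤ M) {x : R} (hx : x ∈ M) :
    ∃ u, u ∉ M ∧ ∃ n : ℕ, u * x ^ (n + 1) ∈ I := by
  by_contra hcon
  push_neg at hcon
  have hMp : M.IsPrime := hM.isPrime
  have h1M : (1 : R) ∉ M := (Ideal.ne_top_iff_one M).mp hM.ne_top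
  let S : Submonoid R :=
    { carrier := {y | ∃ u, u ∉ M ∧ ∃ n : ℕ, y = u * x ^ n}
      mul_mem' := by
        rintro a b ⟨u, hu, n, rfl⟩ ⟨v, hv, m, rfl⟩
        exact ⟨u * v, fun h => (hMp.mem_or_mem h).elim hu hv, n + m, by ring⟩
      one_mem' := ⟨1, h1M, 0, by simp⟩ }
  have hdisj : Disjoint (I : Set R) (S : Set R) := by
    rw [Set.disjoint_left]
    rintro y hyI ⟨u, hu, n, rfl⟩
    cases n with
    | zero => exact hu (hIM (by simpa using hyI))
    | succ n => exact hcon u hu n hyI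
  obtain ⟨Q, hQp, hIQ, hQdisj⟩ := Ideal.exists_le_prime_disjoint I S hdisj
  have hQM : Q ≤ M := by
    intro q hq
    by_contra hqM
    exact Set.disjoint_left.mp hQdisj hq ⟨q, hqM, 0, by simp⟩
  have hQmax : Q.IsMaximal := hdim Q hQp hIQ
  have hQeq : Q = M := hQmax.eq_of_le hM.ne_top hQM
  have hxQ : x ∈ Q := by rw [hQeq]; exact hx
  exact Set.disjoint_left.mp hQdisj hxQ ⟨1, h1M, 1, by ring⟩

/-- Dichotomy for maximal ideals over a 2-absorbing ideal: either `M = I + (t)` with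
`t^2 ∈ I`, or `M` is idempotent modulo `I` (witnessed by `e`). -/
lemma aux_key (h2 : ∀ a b c : R, a * b * c ∈ I → a * b ∈ I ∨ b * c ∈ I ∨ a * c ∈ I)
    (hdim : ∀ P : Ideal R, P.IsPrime → I ≤ P → P.IsMaximal)
    (hgen : ∀ M : Ideal R, M.IsMaximal → I ≤ M → ∃ t : R, M = I ⊔ Ideal.span {t})
    (M : Ideal R) (hM : M.IsMaximal) (hIM : I ≤ M) :
    (∃ t : R, M = I ⊔ Ideal.span {t} ∧ t ^ 2 ∈ I) ∨
    (∃ e, e ∈ M ∧ (1 - e) ∉ I ∧ ∀ m ∈ M, (1 - e) * m ∈ I) := by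
  obtain ⟨t, hMt⟩ := hgen M hM hIM
  have htM : t ∈ M := by
    rw [hMt]; exact Submodule.mem_sup_right (Ideal.subset_span rfl)
  obtain ⟨u, hu, n, hun⟩ := aux_lemmaL I hdim M hM hIM htM
  rcases aux_mul_pow I h2 n u t hun with hut | ht2
  · right
    obtain ⟨s, i0, hi0M, hsi⟩ := hM.exists_inv hu
    refine ⟨i0, hi0M, ?_, ?_⟩
    · intro hfI
      apply hM.ne_top
      rw [Ideal.eq_top_iff_one]
      have e1 : (1 : R) = (1 - i0) + i0 := by ring
      rw [e1]
      exact M.add_mem (hIM hfI) hi0M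
    · intro m hm
      have hum : u * m ∈ I := by
        rw [hMt] at hm
        obtain ⟨i, hi, y, hy, hiy⟩ := Submodule.mem_sup.mp hm
        obtain ⟨c, hc⟩ := Ideal.mem_span_singleton'.mp hy
        have e1 : u * m = u * i + c * (u * t) := by
          rw [← hiy, ← hc]; ring
        rw [e1]
        exact I.add_mem (I.mul_mem_left u hi) (I.mul_mem_left c hut)
      have e1 : (1 - i0) * m = s * (u * m) := by
        have e2 : (1 : R) - i0 = s * u := by linear_combination - hsi
        rw [e2]; ring
      rw [e1]
      exact I.mul_mem_left s hum
  · exact Or.inl ⟨t, hMt, ht2⟩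

end Aux

/-- A proper ideal `I` is quasi-maximal iff it is 2-absorbing, every prime containing `I`
is maximal, and for every maximal `M ⊇ I` the ideal `M/I` is principal. -/
theorem quasiMaximal_iff_twoAbsorbing {R : Type*} [CommRing R] (I : Ideal R) (hI : I ≠ ⊤) :
    I.QuasiMaximal ↔
      I.TwoAbsorbing ∧
      (∀ P : Ideal R, P.IsPrime → I ≤ P → P.IsMaximal) ∧
      (∀ M : Ideal R, M.IsMaximal → I ≤ M → ∃ t : R, M = I ⊔ Ideal.span {t}) := by
  constructor
  · rintro ⟨-, hQ⟩
    have killer : ∀ x w : R, I ⊔ Ideal.span {x} = ⊤ → x * w ∈ I → w ∈ I := by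
      intro x w htop hxw
      have h1 : (1 : R) ∈ I ⊔ Ideal.span {x} := by rw [htop]; exact Submodule.mem_top
      obtain ⟨i, hi, y, hy, hiy⟩ := Submodule.mem_sup.mp h1
      obtain ⟨r, hr⟩ := Ideal.mem_span_singleton'.mp hy
      have e1 : w = w * i + r * (x * w) := by
        have h1' : i + r * x = 1 := by rw [← hiy, ← hr]
        linear_combination (- w) * h1'
      rw [e1]
      exact I.add_mem (I.mul_mem_left w hi) (I.mul_mem_left r hxw)
    have maxOf : ∀ x w : R, x ∉ I → x * w ∈ I → w ∉ I → (I ⊔ Ideal.span {x}).IsMaximal := by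
      intro x w hx hxw hw
      rcases hQ x hx with h | h
      · exact absurd (killer x w h hxw) hw
      · exact h
    refine ⟨⟨hI, ?_⟩, ?_, ?_⟩
    · -- 2-absorbing
      intro a b c habc
      by_contra hcon
      push_neg at hcon
      obtain ⟨hab, hbc, hac⟩ := hcon
      have ha : a ∉ I := fun h => hab (I.mul_mem_right b h)
      have hb : b ∉ I := fun h => hab (I.mul_mem_left a h)
      have hcI : c ∉ I := fun h => hbc (I.mul_mem_left b h)
      have Ma : (I ⊔ Ideal.span {a}).IsMaximal :=
        maxOf a (b * c) ha (by rwa [show a * (b * c) = a * b * c by ring]) hbc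
      have Mb : (I ⊔ Ideal.span {b}).IsMaximal :=
        maxOf b (a * c) hb (by rwa [show b * (a * c) = a * b * c by ring]) hac
      have Mc : (I ⊔ Ideal.span {c}).IsMaximal :=
        maxOf c (a * b) hcI (by rwa [show c * (a * b) = a * b * c by ring]) hab
      have Mab : (I ⊔ Ideal.span {a * b}).IsMaximal := maxOf (a * b) c hab habc hcI
      have Mbc : (I ⊔ Ideal.span {b * c}).IsMaximal :=
        maxOf (b * c) a hbc (by rwa [show b * c * a = a * b * c by ring]) ha
      have Mac : (I ⊔ Ideal.span {a * c}).IsMaximal :=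
        maxOf (a * c) b hac (by rwa [show a * c * b = a * b * c by ring]) hb
      have lemem : ∀ x y : R, (∃ r : R, r * y = x) → I ⊔ Ideal.span {x} ≤ I ⊔ Ideal.span {y} :=
        fun x y hxy => sup_le le_sup_left ((Ideal.span_singleton_le_iff_mem _).mpr
          (Submodule.mem_sup_right (Ideal.mem_span_singleton'.mpr hxy)))
      have eab_a : I ⊔ Ideal.span {a * b} = I ⊔ Ideal.span {a} :=
        Mab.eq_of_le Ma.ne_top (lemem _ _ ⟨b, by ring⟩)
      have eab_b : I ⊔ Ideal.span {a * b} = I ⊔ Ideal.span {b} :=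
        Mab.eq_of_le Mb.ne_top (lemem _ _ ⟨a, rfl⟩)
      have ebc_b : I ⊔ Ideal.span {b * c} = I ⊔ Ideal.span {b} :=
        Mbc.eq_of_le Mb.ne_top (lemem _ _ ⟨c, by ring⟩)
      have eac_a : I ⊔ Ideal.span {a * c} = I ⊔ Ideal.span {a} :=
        Mac.eq_of_le Ma.ne_top (lemem _ _ ⟨c, by ring⟩)
      have eq_ba : I ⊔ Ideal.span {b} = I ⊔ Ideal.span {a} := eab_b.symm.trans eab_a
      -- a ∈ I ⊔ span {b*c}, hence a² ∈ I
      have haMbc : a ∈ I ⊔ Ideal.span {b * c} := by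
        rw [ebc_b, eq_ba]
        exact Submodule.mem_sup_right (Ideal.subset_span rfl)
      have ha2 : a * a ∈ I := by
        obtain ⟨i, hi, y, hy, hiy⟩ := Submodule.mem_sup.mp haMbc
        obtain ⟨r, hr⟩ := Ideal.mem_span_singleton'.mp hy
        have ea : i + r * (b * c) = a := by rw [hr]; exact hiy
        have e1 : a * a = a * i + r * (a * b * c) := by linear_combination (- a) * ea
        rw [e1]
        exact I.add_mem (I.mul_mem_left a hi) (I.mul_mem_left r habc)
      -- b ∈ I ⊔ span {a*c}, hence b² ∈ I
      have hbMac : b ∈ I ⊔ Ideal.span {a * c} := by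
        rw [eac_a, ← eq_ba]
        exact Submodule.mem_sup_right (Ideal.subset_span rfl)
      have hb2 : b * b ∈ I := by
        obtain ⟨i, hi, y, hy, hiy⟩ := Submodule.mem_sup.mp hbMac
        obtain ⟨r, hr⟩ := Ideal.mem_span_singleton'.mp hy
        have eb : i + r * (a * c) = b := by rw [hr]; exact hiy
        have e1 : b * b = b * i + r * (a * b * c) := by linear_combination (- b) * eb
        rw [e1]
        exact I.add_mem (I.mul_mem_left b hi) (I.mul_mem_left r habc)
      -- a + b ∉ I
      have habI : a + b ∉ I := by
        intro h
        apply hab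
        have e1 : a * b = (a + b) * b - b * b := by ring
        rw [e1]
        exact I.sub_mem (I.mul_mem_right b h) hb2
      have habMa : a + b ∈ I ⊔ Ideal.span {a} := by
        refine Submodule.add_mem _ (Submodule.mem_sup_right (Ideal.subset_span rfl)) ?_
        rw [← eq_ba]
        exact Submodule.mem_sup_right (Ideal.subset_span rfl)
      have hle : I ⊔ Ideal.span {a + b} ≤ I ⊔ Ideal.span {a} :=
        sup_le le_sup_left ((Ideal.span_singleton_le_iff_mem _).mpr habMa)
      rcases hQ (a + b) habI with h | h
      · rw [h] at hle
        exact Ma.ne_top (top_le_iff.mp hle)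
      · have eqK : I ⊔ Ideal.span {a + b} = I ⊔ Ideal.span {a} := h.eq_of_le Ma.ne_top hle
        have haK : a ∈ I ⊔ Ideal.span {a + b} := by
          rw [eqK]
          exact Submodule.mem_sup_right (Ideal.subset_span rfl)
        obtain ⟨i, hi, y, hy, hiy⟩ := Submodule.mem_sup.mp haK
        obtain ⟨s, hs⟩ := Ideal.mem_span_singleton'.mp hy
        have ea : i + s * (a + b) = a := by rw [hs]; exact hiy
        have hsab : s * (a * b) ∈ I := by
          have e1 : s * (a * b) = a * a - a * i - s * (a * a) := by linear_combination a * ea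
          rw [e1]
          exact I.sub_mem (I.sub_mem ha2 (I.mul_mem_left a hi)) (I.mul_mem_left s ha2)
        apply hab
        have e2 : a * b = b * i + s * (a * b) + s * (b * b) := by linear_combination (- b) * ea
        rw [e2]
        exact I.add_mem (I.add_mem (I.mul_mem_left b hi) hsab) (I.mul_mem_left s hb2)
    · -- dimension condition
      intro P hP hIP
      rcases eq_or_lt_of_le hIP with hEq | hlt
      · subst hEq
        have htop : ∀ x, x ∉ I → I ⊔ Ideal.span {x} = ⊤ := by
          intro x hx
          rcases hQ x hx with h | h
          · exact h
          · exfalso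
            have hxx : x * x ∉ I := fun hm => hx ((hP.mem_or_mem hm).elim id id)
            have le2 : I ⊔ Ideal.span {x * x} ≤ I ⊔ Ideal.span {x} :=
              sup_le le_sup_left ((Ideal.span_singleton_le_iff_mem _).mpr
                (Submodule.mem_sup_right (Ideal.mem_span_singleton'.mpr ⟨x, rfl⟩)))
            rcases hQ (x * x) hxx with h2' | h2'
            · rw [h2'] at le2
              exact h.ne_top (top_le_iff.mp le2)
            · have eqK : I ⊔ Ideal.span {x * x} = I ⊔ Ideal.span {x} :=
                h2'.eq_of_le h.ne_top le2
              have hxK : x ∈ I ⊔ Ideal.span {x * x} := by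
                rw [eqK]
                exact Submodule.mem_sup_right (Ideal.subset_span rfl)
              obtain ⟨i, hi, y, hy, hiy⟩ := Submodule.mem_sup.mp hxK
              obtain ⟨r, hr⟩ := Ideal.mem_span_singleton'.mp hy
              have ex : i + r * (x * x) = x := by rw [hr]; exact hiy
              have hxi : x * (1 - r * x) ∈ I := by
                have e1 : x * (1 - r * x) = i := by linear_combination - ex
                rw [e1]; exact hi
              rcases hP.mem_or_mem hxi with hm | hm
              · exact hx hm
              · apply h.ne_top
                rw [Ideal.eq_top_iff_one]
                have e1 : (1 : R) = (1 - r * x) + r * x := by ring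
                rw [e1]
                exact Submodule.add_mem _ (Submodule.mem_sup_left hm)
                  (Submodule.mem_sup_right (Ideal.mem_span_singleton'.mpr ⟨r, rfl⟩))
        refine Ideal.isMaximal_iff.mpr ⟨fun h1 => hI ((Ideal.eq_top_iff_one I).mpr h1), ?_⟩
        intro J x hIJ hxI hxJ
        have hle : I ⊔ Ideal.span {x} ≤ J :=
          sup_le hIJ ((Ideal.span_singleton_le_iff_mem _).mpr hxJ)
        rw [htop x hxI] at hle
        exact hle Submodule.mem_top
      · obtain ⟨a, haP, haI⟩ := SetLike.exists_of_lt hlt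
        have hle : I ⊔ Ideal.span {a} ≤ P :=
          sup_le hIP ((Ideal.span_singleton_le_iff_mem _).mpr haP)
        rcases hQ a haI with h | h
        · rw [h] at hle
          exact absurd (top_le_iff.mp hle) hP.ne_top
        · rw [← h.eq_of_le hP.ne_top hle]
          exact h
    · -- principal generation of maximal ideals mod I
      intro M hM hIM
      rcases eq_or_lt_of_le hIM with hEq | hlt
      · refine ⟨0, ?_⟩
        rw [← hEq]
        have hz : Ideal.span ({0} : Set R) = ⊥ := by simp
        rw [hz, sup_bot_eq]
      · obtain ⟨t, htM, htI⟩ := SetLike.exists_of_lt hlt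
        have hle : I ⊔ Ideal.span {t} ≤ M :=
          sup_le hIM ((Ideal.span_singleton_le_iff_mem _).mpr htM)
        rcases hQ t htI with h | h
        · rw [h] at hle
          exact absurd (top_le_iff.mp hle) hM.ne_top
        · exact ⟨t, (h.eq_of_le hM.ne_top hle).symm⟩
  · rintro ⟨⟨-, h2⟩, hdim, hgen⟩
    refine ⟨hI, ?_⟩
    intro a ha
    by_cases hJ : I ⊔ Ideal.span {a} = ⊤
    · exact Or.inl hJ
    right
    obtain ⟨M, hM, hJM⟩ := Ideal.exists_le_maximal _ hJ
    have hIM : I ≤ M := le_trans le_sup_left hJM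
    have haM : a ∈ M := hJM (Submodule.mem_sup_right (Ideal.subset_span rfl))
    suffices hMJ : M ≤ I ⊔ Ideal.span {a} by
      rw [le_antisymm hJM hMJ]; exact hM
    rcases aux_key I h2 hdim hgen M hM hIM with ⟨t, hMt, ht2⟩ | ⟨e, heM, hfI, hfm⟩
    · -- Type 1: t² ∈ I, M is the unique maximal ideal over I
      have huniq : ∀ N : Ideal R, N.IsMaximal → I ≤ N → N = M := by
        intro N hN hIN
        have htN : t ∈ N := hN.isPrime.mem_of_pow_mem 2 (hIN ht2)
        have hMN : M ≤ N := by
          rw [hMt]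
          exact sup_le hIN ((Ideal.span_singleton_le_iff_mem _).mpr htN)
        exact (hM.eq_of_le hN.ne_top hMN).symm
      have haM' : a ∈ I ⊔ Ideal.span {t} := by rw [← hMt]; exact haM
      obtain ⟨i, hi, y, hy, hiy⟩ := Submodule.mem_sup.mp haM'
      obtain ⟨r, hr⟩ := Ideal.mem_span_singleton'.mp hy
      have ea : i + r * t = a := by rw [hr]; exact hiy
      have hrM : r ∉ M := by
        intro hrM
        rw [hMt] at hrM
        obtain ⟨i', hi', y', hy', hiy'⟩ := Submodule.mem_sup.mp hrM
        obtain ⟨c, hc⟩ := Ideal.mem_span_singleton'.mp hy'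
        apply ha
        have hrt : r * t ∈ I := by
          have e1 : r * t = i' * t + c * t ^ 2 := by
            rw [show r = i' + c * t by rw [← hiy', ← hc]]; ring
          rw [e1]
          exact I.add_mem (I.mul_mem_right t hi') (I.mul_mem_left c ht2)
        have e2 : a = i + r * t := ea.symm
        rw [e2]
        exact I.add_mem hi hrt
      have hrtop : I ⊔ Ideal.span {r} = ⊤ := by
        by_contra hne
        obtain ⟨N, hN, hle⟩ := Ideal.exists_le_maximal _ hne
        have hNM := huniq N hN (le_trans le_sup_left hle)
        have hrN : r ∈ N := hle (Submodule.mem_sup_right (Ideal.subset_span rfl))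
        rw [hNM] at hrN
        exact hrM hrN
      have h1 : (1 : R) ∈ I ⊔ Ideal.span {r} := by rw [hrtop]; exact Submodule.mem_top
      obtain ⟨i2, hi2, y2, hy2, hiy2⟩ := Submodule.mem_sup.mp h1
      obtain ⟨s, hs⟩ := Ideal.mem_span_singleton'.mp hy2
      have h1' : i2 + s * r = 1 := by rw [hs]; exact hiy2
      have htJ : t ∈ I ⊔ Ideal.span {a} := by
        have et : t = (t * i2 - s * i) + s * a := by
          linear_combination (- t) * h1' + s * ea
        rw [et]
        refine Submodule.add_mem _ (Submodule.mem_sup_left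
          (I.sub_mem (I.mul_mem_left t hi2) (I.mul_mem_left s hi)))
          (Submodule.mem_sup_right (Ideal.mem_span_singleton'.mpr ⟨s, rfl⟩))
      rw [hMt]
      exact sup_le le_sup_left ((Ideal.span_singleton_le_iff_mem _).mpr htJ)
    · -- Type 2: M idempotent modulo I, witnessed by e
      have haf : (1 - e) * a ∈ I := hfm a haM
      have hfe : (1 - e) * e ∈ I := hfm e heM
      have hff : (1 - e) * (1 - e) - (1 - e) ∈ I := by
        have e1 : (1 - e) * (1 - e) - (1 - e) = -((1 - e) * e) := by ring
        rw [e1]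
        exact I.neg_mem hfe
      have ha2 : a * a ∉ I := by
        intro ha2
        have hprod : (a + (1 - e)) * (a + (1 - e)) * e ∈ I := by
          have e1 : (a + (1 - e)) * (a + (1 - e)) * e =
              e * (a * a) + (2 * e) * ((1 - e) * a) + e * ((1 - e) * (1 - e) - (1 - e))
                + (1 - e) * e := by ring
          rw [e1]
          exact I.add_mem (I.add_mem (I.add_mem (I.mul_mem_left e ha2)
            (I.mul_mem_left _ haf)) (I.mul_mem_left e hff)) hfe
        rcases h2 (a + (1 - e)) (a + (1 - e)) e hprod with h | h | h
        · apply hfI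
          have e1 : (1 - e) = (a + (1 - e)) * (a + (1 - e)) - a * a - 2 * ((1 - e) * a)
              - ((1 - e) * (1 - e) - (1 - e)) := by ring
          rw [e1]
          exact I.sub_mem (I.sub_mem (I.sub_mem h ha2) (I.mul_mem_left 2 haf)) hff
        · apply ha
          have e1 : a = (a + (1 - e)) * e - (1 - e) * e + (1 - e) * a := by ring
          rw [e1]
          exact I.add_mem (I.sub_mem h hfe) haf
        · apply ha
          have e1 : a = (a + (1 - e)) * e - (1 - e) * e + (1 - e) * a := by ring
          rw [e1]
          exact I.add_mem (I.sub_mem h hfe) haf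
      have hT : (I ⊔ Ideal.span {a}) ⊔ Ideal.span {1 - e} = ⊤ := by
        by_contra hne
        obtain ⟨M', hM', hle⟩ := Ideal.exists_le_maximal _ hne
        have hIM' : I ≤ M' := le_trans (le_trans le_sup_left le_sup_left) hle
        have haM' : a ∈ M' :=
          hle (Submodule.mem_sup_left (Submodule.mem_sup_right (Ideal.subset_span rfl)))
        have hfM' : (1 - e) ∈ M' := hle (Submodule.mem_sup_right (Ideal.subset_span rfl))
        have hMM' : M' ≠ M := by
          intro hEq
          apply hM.ne_top
          rw [Ideal.eq_top_iff_one]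
          have e1 : (1 : R) = (1 - e) + e := by ring
          rw [e1]
          exact M.add_mem (by rw [← hEq]; exact hfM') heM
        rcases aux_key I h2 hdim hgen M' hM' hIM' with ⟨t', hMt', ht'2⟩ | ⟨e', heM', hf'I, hf'm⟩
        · have ht'M : t' ∈ M := hM.isPrime.mem_of_pow_mem 2 (hIM ht'2)
          apply hMM'
          have hM'M : M' ≤ M := by
            rw [hMt']
            exact sup_le hIM ((Ideal.span_singleton_le_iff_mem _).mpr ht'M)
          exact hM'.eq_of_le hM.ne_top hM'M
        · have hf'a : (1 - e') * a ∈ I := hf'm a haM'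
          have hf'f : (1 - e') * (1 - e) ∈ I := hf'm (1 - e) hfM'
          have hf'e' : (1 - e') * e' ∈ I := hf'm e' heM'
          have hf'f' : (1 - e') * (1 - e') - (1 - e') ∈ I := by
            have e1 : (1 - e') * (1 - e') - (1 - e') = -((1 - e') * e') := by ring
            rw [e1]
            exact I.neg_mem hf'e'
          have hprod : ((1 - e) + (1 - e')) * (a + (1 - e)) * (a + (1 - e')) ∈ I := by
            have e1 : ((1 - e) + (1 - e')) * (a + (1 - e)) * (a + (1 - e')) =
                a * ((1 - e) * a) + a * ((1 - e') * a)
                + ((1 - e) + (1 - e')) * (((1 - e') * a) + ((1 - e) * a)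
                    + ((1 - e') * (1 - e))) := by ring
            rw [e1]
            exact I.add_mem (I.add_mem (I.mul_mem_left a haf) (I.mul_mem_left a hf'a))
              (I.mul_mem_left _ (I.add_mem (I.add_mem hf'a haf) hf'f))
          rcases h2 ((1 - e) + (1 - e')) (a + (1 - e)) (a + (1 - e')) hprod with h | h | h
          · apply hfI
            have e1 : (1 - e) = ((1 - e) + (1 - e')) * (a + (1 - e))
                - ((1 - e) * (1 - e) - (1 - e)) - (1 - e) * a - (1 - e') * a
                - (1 - e') * (1 - e) := by ring
            rw [e1]
            exact I.sub_mem (I.sub_mem (I.sub_mem (I.sub_mem h hff) haf) hf'a) hf'f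
          · apply ha2
            have e1 : a * a = (a + (1 - e)) * (a + (1 - e')) - (1 - e') * a - (1 - e) * a
                - (1 - e) * (1 - e') := by ring
            rw [e1]
            refine I.sub_mem (I.sub_mem (I.sub_mem h hf'a) haf) ?_
            have e2 : (1 - e) * (1 - e') = (1 - e') * (1 - e) := by ring
            rw [e2]; exact hf'f
          · apply hf'I
            have e1 : (1 - e') = ((1 - e) + (1 - e')) * (a + (1 - e'))
                - ((1 - e') * (1 - e') - (1 - e')) - (1 - e) * a - (1 - e') * a
                - (1 - e') * (1 - e) := by ring
            rw [e1]
            exact I.sub_mem (I.sub_mem (I.sub_mem (I.sub_mem h hf'f') haf) hf'a) hf'f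
      have h1 : (1 : R) ∈ (I ⊔ Ideal.span {a}) ⊔ Ideal.span {1 - e} := by
        rw [hT]; exact Submodule.mem_top
      obtain ⟨w, hw, y3, hy3, h1eq⟩ := Submodule.mem_sup.mp h1
      obtain ⟨c, hc⟩ := Ideal.mem_span_singleton'.mp hy3
      intro m hm
      have em : m = m * w + c * ((1 - e) * m) := by
        have h1' : w + c * (1 - e) = 1 := by rw [hc]; exact h1eq
        linear_combination (- m) * h1'
      rw [em]
      exact Submodule.add_mem _ ((I ⊔ Ideal.span {a}).mul_mem_left m hw)
        (Submodule.mem_sup_left (I.mul_mem_left c (hfm m hm)))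
end

section
/- Let R be a commutative ring and M a maximal ideal of R with M² ≠ M. Then the following are equivalent: (1) M² is a quasi-maximal ideal of R; (2) the ideal M/M² of R/M² is principal, i.e. there exists t ∈ R with M = M² + Rt; (3) the length of M/M² as an R-module equals 1. -/
lemma krullDim_eq_one_iff_isSimpleOrder {α : Type*} [PartialOrder α] [BoundedOrder α] :
    Order.krullDim α = 1 ↔ IsSimpleOrder α := by
  constructor
  · intro h
    have hnt : Nontrivial α := by
      by_contra hn
      rw [not_nontrivial_iff_subsingleton] at hn
      have := Order.krullDim_nonpos_of_subsingleton (α := α)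
      rw [h] at this
      norm_num at this
    refine ⟨fun a => ?_⟩
    by_contra hc
    push_neg at hc
    obtain ⟨h1, h2⟩ := hc
    have l1 : (⊥ : α) < a := bot_le.lt_of_ne (Ne.symm h1)
    have l2 : a < ⊤ := le_top.lt_of_ne h2
    let p : LTSeries α :=
      ((RelSeries.singleton _ (⊤ : α)).cons a l2).cons ⊥ (by exact l1)
    have hp := Order.LTSeries.length_le_krullDim p
    rw [h] at hp
    have hlen : p.length = 2 := by simp [p]; rfl
    rw [hlen] at hp
    norm_num at hp
  · intro hs
    have hnt : Nontrivial α := hs.toNontrivial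
    apply le_antisymm
    · rw [Order.krullDim_eq_iSup_length]
      rw [show ((1 : WithBot ℕ∞)) = ((1 : ℕ∞) : WithBot ℕ∞) from rfl, WithBot.coe_le_coe]
      apply iSup_le
      intro p
      suffices hle : p.length ≤ 1 by exact_mod_cast hle
      by_contra hgt
      push_neg at hgt
      have h2 : 2 ≤ p.length := hgt
      have i0 : Fin (p.length + 1) := ⟨0, by omega⟩
      have h01 : p.toFun ⟨0, by omega⟩ < p.toFun ⟨1, by omega⟩ :=
        p.strictMono (by simp [Fin.lt_def])
      have h12 : p.toFun ⟨1, by omega⟩ < p.toFun ⟨2, by omega⟩ :=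
        p.strictMono (by simp [Fin.lt_def])
      rcases hs.eq_bot_or_eq_top (p.toFun ⟨1, by omega⟩) with hb | ht
      · rw [hb] at h01; exact not_lt_bot h01
      · rw [ht] at h12; exact not_top_lt h12
    · have hq : (⊥ : α) < (RelSeries.singleton {(a, b) : α × α | a < b} (⊤ : α)).head := by
        simpa using (bot_lt_top : (⊥ : α) < ⊤)
      have hp := Order.LTSeries.length_le_krullDim
        ((RelSeries.singleton {(a, b) : α × α | a < b} (⊤ : α)).cons (⊥ : α) hq)
      simpa using hp

section Main

variable {R : Type*} [CommRing R] (M : Ideal R)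

lemma pow_two_le : M ^ 2 ≤ M := Ideal.pow_le_self (by norm_num)

/-- Principal mod `M²` implies the quotient is simple. -/
lemma simple_of_principal (hM : M.IsMaximal) (hne : M ^ 2 ≠ M)
    (ht : ∃ t : R, M = M ^ 2 ⊔ Ideal.span {t}) :
    IsSimpleModule R (↥M ⧸ Submodule.comap M.subtype (M ^ 2)) := by
  obtain ⟨t, htM⟩ := ht
  have htmem : t ∈ M := by
    rw [htM]; exact Ideal.mem_sup_right (Ideal.mem_span_singleton_self t)
  have hKne : (Submodule.comap M.subtype (M ^ 2) : Submodule R ↥M) ≠ ⊤ := by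
    intro hK
    apply hne
    refine le_antisymm (pow_two_le M) ?_
    intro x hx
    have : (⟨x, hx⟩ : ↥M) ∈ (Submodule.comap M.subtype (M ^ 2) : Submodule R ↥M) := by rw [hK]; trivial
    exact this
  have hnt : Nontrivial (↥M ⧸ Submodule.comap M.subtype (M ^ 2)) :=
    Submodule.Quotient.nontrivial_iff.mpr hKne
  set tbar : ↥M ⧸ Submodule.comap M.subtype (M ^ 2) := Submodule.Quotient.mk ⟨t, htmem⟩ with htbar
  -- every element of V is a multiple of tbar
  have hgen : ∀ w : ↥M ⧸ Submodule.comap M.subtype (M ^ 2), ∃ r : R, w = r • tbar := by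
    intro w
    obtain ⟨⟨x, hx⟩, rfl⟩ := Submodule.Quotient.mk_surjective _ w
    have hx' : x ∈ M ^ 2 ⊔ Ideal.span {t} := htM ▸ hx
    obtain ⟨y, hy, z, hz, hyz⟩ := Submodule.mem_sup.mp hx'
    obtain ⟨r, rfl⟩ := Ideal.mem_span_singleton'.mp hz
    refine ⟨r, ?_⟩
    rw [htbar, ← Submodule.Quotient.mk_smul, Submodule.Quotient.eq]
    show x - r * t ∈ M ^ 2
    have : x - r * t = y := by rw [← hyz]; ring
    rwa [this]
  -- M annihilates V
  have hann : ∀ r ∈ M, r • tbar = (0 : ↥M ⧸ Submodule.comap M.subtype (M ^ 2)) := by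
    intro r hr
    rw [htbar, ← Submodule.Quotient.mk_smul, Submodule.Quotient.mk_eq_zero]
    show r * t ∈ M ^ 2
    rw [pow_two]
    exact Ideal.mul_mem_mul hr htmem
  refine (isSimpleModule_iff R _).mpr ⟨fun N => ?_⟩
  rcases eq_or_ne N ⊥ with hN | hN
  · exact Or.inl hN
  · right
    obtain ⟨v, hvN, hv0⟩ := Submodule.exists_mem_ne_zero_of_ne_bot hN
    obtain ⟨r, rfl⟩ := hgen v
    have hrM : r ∉ M := fun hr => hv0 (hann r hr)
    obtain ⟨y, i, hi, hyi⟩ := hM.exists_inv hrM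
    have htN : tbar ∈ N := by
      have : tbar = y • (r • tbar) + i • tbar := by
        rw [smul_smul, ← add_smul, hyi, one_smul]
      rw [this, hann i hi, add_zero]
      exact N.smul_mem y hvN
    rw [eq_top_iff]
    intro w _
    obtain ⟨s, rfl⟩ := hgen w
    exact N.smul_mem s htN

/-- Simplicity of the quotient implies `M²` is quasi-maximal. -/
lemma quasiMaximal_of_simple (hM : M.IsMaximal)
    (hs : IsSimpleModule R (↥M ⧸ Submodule.comap M.subtype (M ^ 2))) : (M ^ 2).QuasiMaximal := by
  constructor
  · intro h
    exact hM.ne_top (top_le_iff.mp (h ▸ pow_two_le M))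
  · intro a ha
    by_cases haM : a ∈ M
    · -- M² ⊔ span a = M, which is maximal
      right
      have heq : M ^ 2 ⊔ Ideal.span {a} = M := by
        apply le_antisymm
        · exact sup_le (pow_two_le M) ((Ideal.span_singleton_le_iff_mem M).mpr haM)
        · -- use simplicity
          have habar : (Submodule.Quotient.mk ⟨a, haM⟩ : ↥M ⧸ Submodule.comap M.subtype (M ^ 2)) ≠ 0 := by
            intro h0
            have := (Submodule.Quotient.mk_eq_zero (Submodule.comap M.subtype (M ^ 2))).mp h0
            rw [Submodule.mem_comap] at this
            exact ha (by simpa using this)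
          have hspan : Submodule.span R {(Submodule.Quotient.mk ⟨a, haM⟩ : ↥M ⧸ Submodule.comap M.subtype (M ^ 2))} = ⊤ := by
            rcases hs.eq_bot_or_eq_top
              (Submodule.span R {(Submodule.Quotient.mk ⟨a, haM⟩ : ↥M ⧸ Submodule.comap M.subtype (M ^ 2))}) with hb | ht
            · exfalso
              have hmem : (Submodule.Quotient.mk ⟨a, haM⟩ : ↥M ⧸ Submodule.comap M.subtype (M ^ 2)) ∈
                  Submodule.span R {(Submodule.Quotient.mk ⟨a, haM⟩ : ↥M ⧸ Submodule.comap M.subtype (M ^ 2))} :=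
                Submodule.mem_span_singleton_self _
              rw [hb, Submodule.mem_bot R] at hmem
              exact habar hmem
            · exact ht
          intro x hx
          have : (Submodule.Quotient.mk ⟨x, hx⟩ : ↥M ⧸ Submodule.comap M.subtype (M ^ 2)) ∈
              Submodule.span R {(Submodule.Quotient.mk ⟨a, haM⟩ : ↥M ⧸ Submodule.comap M.subtype (M ^ 2))} := by
            rw [hspan]; trivial
          obtain ⟨r, hr⟩ := Submodule.mem_span_singleton.mp this
          have hmk : (Submodule.Quotient.mk ⟨x, hx⟩ : ↥M ⧸ Submodule.comap M.subtype (M ^ 2)) =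
              Submodule.Quotient.mk (r • ⟨a, haM⟩) := by
            rw [Submodule.Quotient.mk_smul]; exact hr.symm
          have hsub : x - r * a ∈ M ^ 2 := by
            have h' := (Submodule.Quotient.eq _).mp hmk
            rw [Submodule.mem_comap] at h'
            simpa using h'
          have : x = (x - r * a) + r * a := by ring
          rw [this]
          exact Submodule.add_mem _ (Ideal.mem_sup_left hsub)
            (Ideal.mem_sup_right (Ideal.mem_span_singleton'.mpr ⟨r, rfl⟩))
      rw [heq]
      exact hM
    · -- a ∉ M: the sup is ⊤
      left
      obtain ⟨z, i, hi, hzi⟩ := hM.exists_inv haM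
      rw [Ideal.eq_top_iff_one]
      have h1 : (1 : R) = a * (z ^ 2 * a + 2 * z * i) + i ^ 2 := by
        linear_combination (-(z * a + i + 1)) * hzi
      rw [h1]
      refine Submodule.add_mem _ ?_ ?_
      · exact Ideal.mem_sup_right (Ideal.mem_span_singleton.mpr (Dvd.intro _ rfl))
      · exact Ideal.mem_sup_left (by rw [pow_two, pow_two]; exact Ideal.mul_mem_mul hi hi)

/-- Quasi-maximality of `M²` implies principality mod `M²`. -/
lemma principal_of_quasiMaximal (hM : M.IsMaximal) (hne : M ^ 2 ≠ M)
    (hq : (M ^ 2).QuasiMaximal) : ∃ t : R, M = M ^ 2 ⊔ Ideal.span {t} := by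
  obtain ⟨a, haM, ha2⟩ := SetLike.exists_of_lt (lt_of_le_of_ne (pow_two_le M) hne)
  refine ⟨a, ?_⟩
  have hle : M ^ 2 ⊔ Ideal.span {a} ≤ M :=
    sup_le (pow_two_le M) ((Ideal.span_singleton_le_iff_mem M).mpr haM)
  rcases hq.2 a ha2 with h | h
  · exact absurd (h ▸ hle) (fun hh => hM.ne_top (top_le_iff.mp hh))
  · exact (h.eq_of_le hM.ne_top hle).symm

end Main

/-- For a maximal ideal `M` with `M² ≠ M`: `M²` is quasi-maximal iff `M/M²` is principal
iff `length_R(M/M²) = 1`. -/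
theorem sq_quasiMaximal_iff {R : Type*} [CommRing R] (M : Ideal R)
    (hM : M.IsMaximal) (hne : M ^ 2 ≠ M) :
    ((M ^ 2).QuasiMaximal ↔ ∃ t : R, M = M ^ 2 ⊔ Ideal.span {t}) ∧
    ((M ^ 2).QuasiMaximal ↔
      moduleLength R (↥M ⧸ Submodule.comap M.subtype (M ^ 2)) = 1) := by
  have hlen : moduleLength R (↥M ⧸ Submodule.comap M.subtype (M ^ 2)) = 1 ↔
      IsSimpleModule R (↥M ⧸ Submodule.comap M.subtype (M ^ 2)) :=
    krullDim_eq_one_iff_isSimpleOrder.trans (isSimpleModule_iff R _).symm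
  constructor
  · exact ⟨principal_of_quasiMaximal M hM hne,
      fun hp => quasiMaximal_of_simple M hM (simple_of_principal M hM hne hp)⟩
  · constructor
    · intro hq
      exact hlen.mpr (simple_of_principal M hM hne (principal_of_quasiMaximal M hM hne hq))
    · intro hl
      exact quasiMaximal_of_simple M hM (hlen.mp hl)
end

section
/- Let R be a Noetherian integral domain that is not a field. Then R is a Dedekind domain if and only if for every maximal ideal M of R, the ideal M² is quasi-maximal. -/
section Aux

variable {R : Type*} [CommRing R] [IsDomain R] [IsNoetherianRing R]

open IsLocalRing

/-- Key lemma: under the quasi-maximality hypothesis, the localization at any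
maximal ideal is a DVR. -/
lemma key_dvr (hF : ¬ IsField R)
    (H : ∀ M : Ideal R, M.IsMaximal → (M ^ 2).QuasiMaximal)
    (M : Ideal R) (hM : M.IsMaximal) : IsDiscreteValuationRing (Localization.AtPrime M) := by
  haveI := hM.isPrime
  have hMbot : M ≠ ⊥ := Ring.ne_bot_of_isMaximal_of_not_isField hM hF
  set Rm := Localization.AtPrime M with hRm
  haveI : IsNoetherianRing Rm := IsLocalization.isNoetherianRing M.primeCompl _ inferInstance
  have hnf : ¬ IsField Rm := IsLocalization.AtPrime.not_isField R hMbot Rm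
  have hmap : Ideal.map (algebraMap R Rm) M = maximalIdeal Rm :=
    Localization.AtPrime.map_eq_maximalIdeal
  have hjac : maximalIdeal Rm ≤ Ideal.jacobson ⊥ :=
    le_of_eq (IsLocalRing.jacobson_eq_maximalIdeal ⊥ bot_ne_top).symm
  have hfg : (maximalIdeal Rm).FG := IsNoetherian.noetherian _
  have hprin : (maximalIdeal Rm).IsPrincipal := by
    by_cases hMM : M ^ 2 = M
    · have hbot : maximalIdeal Rm ≤ (⊥ : Ideal Rm) := by
        refine Submodule.le_of_le_smul_of_le_jacobson_bot hfg hjac ?_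
        have h2 : maximalIdeal Rm • maximalIdeal Rm = maximalIdeal Rm := by
          rw [smul_eq_mul, ← pow_two, ← hmap, ← Ideal.map_pow, hMM]
        rw [h2]
        exact le_sup_right
      refine ⟨0, ?_⟩
      rw [le_bot_iff.mp hbot]
      exact (Ideal.span_singleton_eq_bot.mpr rfl).symm
    · have hsub : M ^ 2 ≤ M := Ideal.pow_le_self two_ne_zero
      obtain ⟨a, haM, haM2⟩ : ∃ a ∈ M, a ∉ M ^ 2 := by
        by_contra h
        push_neg at h
        exact hMM (le_antisymm hsub h)
      rcases (H M hM).2 a haM2 with htop | hmax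
      · exfalso
        apply hM.ne_top
        rw [← top_le_iff, ← htop]
        exact sup_le hsub ((Ideal.span_singleton_le_iff_mem M).mpr haM)
      · have hEq : M ^ 2 ⊔ Ideal.span {a} = M :=
          hmax.eq_of_le hM.ne_top (sup_le hsub ((Ideal.span_singleton_le_iff_mem M).mpr haM))
        refine ⟨algebraMap R Rm a, ?_⟩
        have hsplit0 : Ideal.map (algebraMap R Rm) (M ^ 2 ⊔ Ideal.span {a}) =
            Ideal.span {algebraMap R Rm a} ⊔ Ideal.map (algebraMap R Rm) (M ^ 2) := by
          rw [Ideal.map_sup, Ideal.map_span, Set.image_singleton, sup_comm]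
        have hsplit : maximalIdeal Rm =
            Ideal.span {algebraMap R Rm a} ⊔ Ideal.map (algebraMap R Rm) (M ^ 2) := by
          rw [← hmap, ← hsplit0]
          exact congrArg _ hEq.symm
        have hle : maximalIdeal Rm ≤ Ideal.span {algebraMap R Rm a} := by
          refine Submodule.le_of_le_smul_of_le_jacobson_bot hfg hjac ?_
          rw [smul_eq_mul, ← pow_two, ← hmap, ← Ideal.map_pow]
          rw [hmap]
          exact le_of_eq hsplit
        have hge : Ideal.span {algebraMap R Rm a} ≤ maximalIdeal Rm := by
          rw [Ideal.span_singleton_le_iff_mem, ← hmap]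
          exact Ideal.mem_map_of_mem _ haM
        exact (le_antisymm hle hge).symm ▸ rfl
  haveI : IsLocalRing Rm := Localization.AtPrime.isLocalRing M
  exact ((IsDiscreteValuationRing.TFAE Rm hnf).out 0 4).mpr hprin

lemma key_dim1 (hF : ¬ IsField R)
    (H : ∀ M : Ideal R, M.IsMaximal → (M ^ 2).QuasiMaximal) :
    Ring.DimensionLEOne R where
  maximalOfPrime := by
    intro p hp hpp
    rcases p.exists_le_maximal hpp.ne_top with ⟨q, hq, hpq⟩
    haveI := hq.isPrime
    let f := (IsLocalization.orderIsoOfPrime q.primeCompl (Localization.AtPrime q)).symm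
    let P := f ⟨p, hpp, hpq.disjoint_compl_left⟩
    let Q := f ⟨q, hq.isPrime, Set.disjoint_left.mpr fun _ a => a⟩
    have hinj : Function.Injective (algebraMap R (Localization.AtPrime q)) :=
      IsLocalization.injective (Localization.AtPrime q) q.primeCompl_le_nonZeroDivisors
    have hp1 : P.1 ≠ ⊥ := fun x => hp ((p.map_eq_bot_iff_of_injective hinj).mp x)
    have hq1 : Q.1 ≠ ⊥ :=
      fun x => (ne_bot_of_le_ne_bot hp hpq) ((q.map_eq_bot_iff_of_injective hinj).mp x)
    rcases (IsDiscreteValuationRing.iff_pid_with_one_nonzero_prime (Localization.AtPrime q)).mp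
      (key_dvr hF H q hq) with ⟨_, huq⟩
    rw [show p = q from Subtype.val_inj.mpr <| f.injective <|
      Subtype.val_inj.mp (huq.unique ⟨hp1, P.2⟩ ⟨hq1, Q.2⟩)]
    exact hq

end Aux

/-- A Noetherian domain which is not a field is a Dedekind domain iff `M²` is
quasi-maximal for every maximal ideal `M`. -/
theorem isDedekindDomain_iff_sq_quasiMaximal {R : Type*} [CommRing R] [IsDomain R]
    [IsNoetherianRing R] (hF : ¬ IsField R) :
    IsDedekindDomain R ↔ ∀ M : Ideal R, M.IsMaximal → (M ^ 2).QuasiMaximal := by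
  constructor
  · intro hDD M hM
    haveI := hM.isPrime
    have hMbot : M ≠ ⊥ := Ring.ne_bot_of_isMaximal_of_not_isField hM hF
    have hsub : M ^ 2 ≤ M := Ideal.pow_le_self two_ne_zero
    refine ⟨fun h => hM.ne_top (top_le_iff.mp (h ▸ hsub)), fun a ha => ?_⟩
    have hprime : Prime M := Ideal.prime_of_isPrime hMbot hM.isPrime
    have hdvd : (M ^ 2 ⊔ Ideal.span {a}) ∣ M ^ 2 := Ideal.dvd_iff_le.mpr le_sup_left
    obtain ⟨i, hi, hassoc⟩ := (dvd_prime_pow hprime 2).mp hdvd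
    rw [associated_iff_eq] at hassoc
    interval_cases i
    · left; rw [hassoc, pow_zero, Ideal.one_eq_top]
    · right; rw [hassoc, pow_one]; exact hM
    · exfalso
      exact ha (hassoc ▸ Ideal.mem_sup_right (Ideal.subset_span (Set.mem_singleton a)))
  · intro H
    haveI : IsDedekindDomainDvr R :=
      { is_dvr_at_nonzero_prime := fun P hP hPp =>
          key_dvr hF H P ((key_dim1 hF H).maximalOfPrime hP hPp) }
    infer_instance
end
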